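/- arXiv:math/0303342 — 9 statements merged into one kernel-verified Lean document; each statement's English description precedes it below -/
import Mathlib

section
/- The kernel T₆(x) = x⁴(x² - 7x/5 + 1/2)/720 for x ∈ [0,1/2) and T₆(x) = (x-1)⁴(x² - 3x/5 + 1/10)/720 for x ∈ [1/2,1] satisfies T₆(x) ≥ 0 for all x ∈ [0,1] and ∫₀¹ T₆(x) dx = 1/604800. -/
/-!
The right-hand piece is the left-hand piece reflected in `x = 1/2`, so the kernel is
`T6Left (min x (1 - x))`. Its quadratic factor `x ^ 2 - 7 x / 5 + 1 / 2 = (x - 7/10) ^ 2 + 1/100`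
is positive, and by the symmetry the integral over `[0, 1]` is twice that of the polynomial
`T6Left` over `[0, 1/2]`.
-/

open intervalIntegral

noncomputable def T6Left (x : ℝ) : ℝ := x ^ 4 * (x ^ 2 - 7 * x / 5 + 1 / 2) / 720

lemma T6Left_nonneg (x : ℝ) : 0 ≤ T6Left x := by
  have hq : x ^ 2 - 7 * x / 5 + 1 / 2 = (x - 7 / 10) ^ 2 + 1 / 100 := by ring
  rw [T6Left, hq]
  positivity

lemma continuous_T6Left : Continuous T6Left := by
  unfold T6Left
  fun_prop

lemma T6Left_one_sub (x : ℝ) :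
    T6Left (1 - x) = (x - 1) ^ 4 * (x ^ 2 - 3 * x / 5 + 1 / 10) / 720 := by
  unfold T6Left
  ring

lemma integral_T6Left : ∫ x in (0:ℝ)..1/2, T6Left x = 1 / 1209600 := by
  have hpoly : T6Left = fun x => (x ^ 6 - 7 / 5 * x ^ 5 + 1 / 2 * x ^ 4) / 720 := by
    funext x
    unfold T6Left
    ring
  rw [hpoly, integral_div, integral_add, integral_sub, integral_const_mul,
    integral_const_mul] <;> norm_num

lemma piecewise_eq_T6Left_min (x : ℝ) :
    (if x < 1/2 then x ^ 4 * (x ^ 2 - 7 * x / 5 + 1/2) / 720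
      else (x - 1) ^ 4 * (x ^ 2 - 3 * x / 5 + 1/10) / 720) = T6Left (min x (1 - x)) := by
  split_ifs with h
  · rw [min_eq_left (by linarith), T6Left]
  · rw [min_eq_right (by linarith), T6Left_one_sub]

lemma integral_comp_min_one_sub {f : ℝ → ℝ} (hf : Continuous f) :
    ∫ x in (0:ℝ)..1, f (min x (1 - x)) = 2 * ∫ x in (0:ℝ)..1/2, f x := by
  have hc : Continuous fun x : ℝ => f (min x (1 - x)) := by fun_prop
  have hleft : Set.EqOn (fun x : ℝ => f (min x (1 - x))) f (Set.uIcc 0 (1/2)) := by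
    intro x hx
    rw [Set.uIcc_of_le (by norm_num)] at hx
    simp only [min_eq_left (by linarith [hx.2] : x ≤ 1 - x)]
  have hright : Set.EqOn (fun x : ℝ => f (min x (1 - x))) (fun x => f (1 - x))
      (Set.uIcc (1/2) 1) := by
    intro x hx
    rw [Set.uIcc_of_le (by norm_num)] at hx
    simp only [min_eq_right (by linarith [hx.1] : 1 - x ≤ x)]
  rw [← integral_add_adjacent_intervals (hc.intervalIntegrable 0 (1/2))
      (hc.intervalIntegrable (1/2) 1),
    integral_congr hleft, integral_congr hright, integral_comp_sub_left]
  norm_num [two_mul]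

theorem T6_nonneg_and_integral :
    (∀ x ∈ Set.Icc (0:ℝ) 1,
      0 ≤ (if x < 1/2 then x ^ 4 * (x ^ 2 - 7 * x / 5 + 1/2) / 720
        else (x - 1) ^ 4 * (x ^ 2 - 3 * x / 5 + 1/10) / 720)) ∧
    (∫ x in (0:ℝ)..1,
      (if x < 1/2 then x ^ 4 * (x ^ 2 - 7 * x / 5 + 1/2) / 720
        else (x - 1) ^ 4 * (x ^ 2 - 3 * x / 5 + 1/10) / 720)) = 1 / 604800 := by
  simp only [piecewise_eq_T6Left_min]
  refine ⟨fun x _ => T6Left_nonneg _, ?_⟩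
  rw [integral_comp_min_one_sub continuous_T6Left, integral_T6Left]
  norm_num
end

section
/- ∫₀¹ |T₂(x)| dx = 19√19/10125, where T₂(x) = x²/2 - 7x/30 + 1/60 for x ∈ [0,1/2) and T₂(x) = x²/2 - 23x/30 + 17/60 for x ∈ [1/2,1]. -/
set_option maxHeartbeats 2000000

open intervalIntegral MeasureTheory

lemma hF' : ∀ x : ℝ, HasDerivAt (fun y : ℝ => y^3/6 - 7*y^2/60 + y/60)
    (x^2/2 - 7*x/30 + 1/60) x := by
  intro x
  have h := (((hasDerivAt_pow 3 x).div_const 6).sub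
      (((hasDerivAt_pow 2 x).const_mul 7).div_const 60)).add ((hasDerivAt_id x).div_const 60)
  exact h.congr_deriv (by norm_num <;> ring)

lemma hG' : ∀ x : ℝ, HasDerivAt (fun y : ℝ => y^3/6 - 23*y^2/60 + 17*y/60)
    (x^2/2 - 23*x/30 + 17/60) x := by
  intro x
  have h := (((hasDerivAt_pow 3 x).div_const 6).sub
      (((hasDerivAt_pow 2 x).const_mul 23).div_const 60)).add
      (((hasDerivAt_id x).const_mul 17).div_const 60)
  exact h.congr_deriv (by norm_num <;> ring)

lemma intP (a b : ℝ) : (∫ x in a..b, (x^2/2 - 7*x/30 + 1/60)) =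
    (b^3/6 - 7*b^2/60 + b/60) - (a^3/6 - 7*a^2/60 + a/60) := by
  apply intervalIntegral.integral_eq_sub_of_hasDerivAt (fun x _ => hF' x)
  apply Continuous.intervalIntegrable
  continuity

lemma intQ (a b : ℝ) : (∫ x in a..b, (x^2/2 - 23*x/30 + 17/60)) =
    (b^3/6 - 23*b^2/60 + 17*b/60) - (a^3/6 - 23*a^2/60 + 17*a/60) := by
  apply intervalIntegral.integral_eq_sub_of_hasDerivAt (fun x _ => hG' x)
  apply Continuous.intervalIntegrable
  continuity

theorem T2_abs_integral :
    (∫ x in (0:ℝ)..1,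
      |if x < 1/2 then x ^ 2 / 2 - 7 * x / 30 + 1 / 60
        else x ^ 2 / 2 - 23 * x / 30 + 17 / 60|) = 19 * Real.sqrt 19 / 10125 := by
  set f : ℝ → ℝ := fun x =>
    |if x < 1/2 then x ^ 2 / 2 - 7 * x / 30 + 1 / 60
      else x ^ 2 / 2 - 23 * x / 30 + 17 / 60| with hf
  set s := Real.sqrt 19 with hsdef
  have hs : s ^ 2 = 19 := Real.sq_sqrt (by norm_num)
  have hs0 : 0 ≤ s := Real.sqrt_nonneg 19
  have hs4 : 4 < s := by nlinarith
  have hs5 : s < 5 := by nlinarith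
  set r1 : ℝ := (7 - s)/30 with hr1
  set r2 : ℝ := (7 + s)/30 with hr2
  set r3 : ℝ := (23 - s)/30 with hr3
  set r4 : ℝ := (23 + s)/30 with hr4
  have h01 : (0:ℝ) ≤ r1 := by rw [hr1]; linarith
  have h12 : r1 ≤ r2 := by rw [hr1, hr2]; linarith
  have h2h : r2 ≤ 1/2 := by rw [hr2]; linarith
  have hh3 : (1:ℝ)/2 ≤ r3 := by rw [hr3]; linarith
  have h34 : r3 ≤ r4 := by rw [hr3, hr4]; linarith
  have h41 : r4 ≤ 1 := by rw [hr4]; linarith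
  have h1h : r1 < 1/2 := by rw [hr1]; linarith
  have h2h' : r2 < 1/2 := by rw [hr2]; linarith
  have h3l : 1/2 < r3 := by rw [hr3]; linarith
  -- continuity of f
  have hcont : Continuous f := by
    have heq : f = fun x : ℝ =>
        |if (1:ℝ)/2 ≤ x then x ^ 2 / 2 - 23 * x / 30 + 17 / 60
          else x ^ 2 / 2 - 7 * x / 30 + 1 / 60| := by
      funext x
      simp only [hf]
      rcases lt_or_ge x (1/2) with h | h
      · rw [if_pos h, if_neg (not_le.mpr h)]
      · rw [if_neg (not_lt.mpr h), if_pos h]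
    rw [heq]
    apply Continuous.abs
    apply Continuous.if_le (by continuity) (by continuity) continuous_const continuous_id
    intro a ha
    have haa : a = 1/2 := by simpa using ha.symm
    subst haa
    norm_num
  have hint : ∀ a b : ℝ, IntervalIntegrable f volume a b :=
    fun a b => hcont.intervalIntegrable a b
  -- split the integral
  have A1 := integral_add_adjacent_intervals (μ := volume) (f := f)
    (a := 0) (b := r1) (c := 1) (hint 0 r1) (hint r1 1)
  have A2 := integral_add_adjacent_intervals (μ := volume) (f := f)
    (a := r1) (b := r2) (c := 1) (hint r1 r2) (hint r2 1)
  have A3 := integral_add_adjacent_intervals (μ := volume) (f := f)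
    (a := r2) (b := 1/2) (c := 1) (hint r2 (1/2)) (hint (1/2) 1)
  have A4 := integral_add_adjacent_intervals (μ := volume) (f := f)
    (a := 1/2) (b := r3) (c := 1) (hint (1/2) r3) (hint r3 1)
  have A5 := integral_add_adjacent_intervals (μ := volume) (f := f)
    (a := r3) (b := r4) (c := 1) (hint r3 r4) (hint r4 1)
  -- evaluate each piece
  have e1 : (∫ x in (0:ℝ)..r1, f x) = ∫ x in (0:ℝ)..r1, (x^2/2 - 7*x/30 + 1/60) := by
    apply intervalIntegral.integral_congr
    intro x hx
    rw [Set.uIcc_of_le h01] at hx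
    obtain ⟨hx0, hx1⟩ := hx
    simp only [hf]
    rw [if_pos (lt_of_le_of_lt hx1 h1h)]
    have key : 0 ≤ (r1 - x) * (r2 - x) :=
      mul_nonneg (by linarith) (by linarith)
    rw [hr1, hr2] at key
    exact abs_of_nonneg (by nlinarith [key, hs])
  have e2 : (∫ x in r1..r2, f x) = ∫ x in r1..r2, -(x^2/2 - 7*x/30 + 1/60) := by
    apply intervalIntegral.integral_congr
    intro x hx
    rw [Set.uIcc_of_le h12] at hx
    obtain ⟨hx0, hx1⟩ := hx
    simp only [hf]
    rw [if_pos (lt_of_le_of_lt hx1 h2h')]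
    have key : 0 ≤ (x - r1) * (r2 - x) :=
      mul_nonneg (by linarith) (by linarith)
    rw [hr1, hr2] at key
    exact abs_of_nonpos (by nlinarith [key, hs])
  have e3 : (∫ x in r2..(1/2:ℝ), f x) = ∫ x in r2..(1/2:ℝ), (x^2/2 - 7*x/30 + 1/60) := by
    apply intervalIntegral.integral_congr
    intro x hx
    rw [Set.uIcc_of_le h2h] at hx
    obtain ⟨hx0, hx1⟩ := hx
    simp only [hf]
    rcases lt_or_ge x (1/2) with h | h
    · rw [if_pos h]
      have key : 0 ≤ (x - r1) * (x - r2) :=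
        mul_nonneg (by linarith) (by linarith)
      rw [hr1, hr2] at key
      exact abs_of_nonneg (by nlinarith [key, hs])
    · have hx2 : x = 1/2 := le_antisymm hx1 h
      rw [if_neg (not_lt.mpr h), hx2]
      norm_num
  have e4 : (∫ x in (1/2:ℝ)..r3, f x) = ∫ x in (1/2:ℝ)..r3, (x^2/2 - 23*x/30 + 17/60) := by
    apply intervalIntegral.integral_congr
    intro x hx
    rw [Set.uIcc_of_le hh3] at hx
    obtain ⟨hx0, hx1⟩ := hx
    simp only [hf]
    rw [if_neg (not_lt.mpr hx0)]
    have key : 0 ≤ (r3 - x) * (r4 - x) :=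
      mul_nonneg (by linarith) (by linarith)
    rw [hr3, hr4] at key
    exact abs_of_nonneg (by nlinarith [key, hs])
  have e5 : (∫ x in r3..r4, f x) = ∫ x in r3..r4, -(x^2/2 - 23*x/30 + 17/60) := by
    apply intervalIntegral.integral_congr
    intro x hx
    rw [Set.uIcc_of_le h34] at hx
    obtain ⟨hx0, hx1⟩ := hx
    simp only [hf]
    rw [if_neg (not_lt.mpr (le_trans (le_of_lt h3l) hx0))]
    have key : 0 ≤ (x - r3) * (r4 - x) :=
      mul_nonneg (by linarith) (by linarith)
    rw [hr3, hr4] at key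
    exact abs_of_nonpos (by nlinarith [key, hs])
  have e6 : (∫ x in r4..(1:ℝ), f x) = ∫ x in r4..(1:ℝ), (x^2/2 - 23*x/30 + 17/60) := by
    apply intervalIntegral.integral_congr
    intro x hx
    rw [Set.uIcc_of_le h41] at hx
    obtain ⟨hx0, hx1⟩ := hx
    simp only [hf]
    rw [if_neg (not_lt.mpr (le_trans (le_trans (le_of_lt h3l) h34) hx0))]
    have key : 0 ≤ (x - r3) * (x - r4) :=
      mul_nonneg (by linarith) (by linarith)
    rw [hr3, hr4] at key
    exact abs_of_nonneg (by nlinarith [key, hs])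
  have hneg2 : (∫ x in r1..r2, -(x^2/2 - 7*x/30 + 1/60)) =
      -∫ x in r1..r2, (x^2/2 - 7*x/30 + 1/60) := intervalIntegral.integral_neg
  have hneg5 : (∫ x in r3..r4, -(x^2/2 - 23*x/30 + 17/60)) =
      -∫ x in r3..r4, (x^2/2 - 23*x/30 + 17/60) := intervalIntegral.integral_neg
  rw [e1] at A1
  rw [e2, hneg2] at A2
  rw [e3] at A3
  rw [e4] at A4
  rw [e5, hneg5] at A5
  rw [intP] at A1 A2 A3
  rw [intQ] at A4 A5 e6
  have final : (∫ x in (0:ℝ)..1, f x) = 19 * s / 10125 := by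
    rw [← A1, ← A2, ← A3, ← A4, ← A5, e6, hr1, hr2, hr3, hr4]
    linear_combination (-s/20250) * hs
  exact final
end

section
/- ∫₀¹ |T₄(x)| dx = 1/14580, where T₄(x) = x²(x-1/3)(x-3/5)/24 for x ∈ [0,1/2) and T₄(x) = (x-1)²(x-2/3)(x-2/5)/24 for x ∈ [1/2,1]. -/
/-!
The kernel is symmetric about `1/2`, `T₄ (1 - x) = T₄ x`, so the integral is twice the integral
over `[0, 1/2]`. There `T₄ x = x² (x - 1/3) (x - 3/5) / 24` is nonnegative on `[0, 1/3]` and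
nonpositive on `[1/3, 1/2]`, and each of the two pieces contributes `1/58320` in absolute value.
-/

open intervalIntegral Set MeasureTheory

theorem intervalIntegral.integral_eq_two_mul_integral_of_symm {f : ℝ → ℝ} {a b : ℝ}
    (hsymm : ∀ x, f (a + b - x) = f x)
    (hf : IntervalIntegrable f volume a ((a + b) / 2)) :
    ∫ x in a..b, f x = 2 * ∫ x in a..(a + b) / 2, f x := by
  have hf' : IntervalIntegrable f volume ((a + b) / 2) b := by
    have := hf.comp_sub_left (a + b)
    rw [show (fun x => f (a + b - x)) = f from funext hsymm] at this
    convert this.symm using 1 <;> ring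
  have hright : ∫ x in (a + b) / 2..b, f x = ∫ x in a..(a + b) / 2, f x := by
    conv_lhs => rw [← funext hsymm, integral_comp_sub_left f]
    congr 1 <;> ring
  rw [← integral_add_adjacent_intervals hf hf', hright, two_mul]

theorem intervalIntegral.integral_abs_eq_sub_of_sign_change {f : ℝ → ℝ} {a b c : ℝ}
    (hab : a ≤ b) (hbc : b ≤ c)
    (hpos : ∀ x ∈ Icc a b, 0 ≤ f x) (hneg : ∀ x ∈ Icc b c, f x ≤ 0)
    (hf₁ : IntervalIntegrable f volume a b) (hf₂ : IntervalIntegrable f volume b c) :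
    ∫ x in a..c, |f x| = (∫ x in a..b, f x) - ∫ x in b..c, f x := by
  have h₁ : ∫ x in a..b, |f x| = ∫ x in a..b, f x :=
    integral_congr fun x hx => abs_of_nonneg (hpos x (uIcc_of_le hab ▸ hx))
  have h₂ : ∫ x in b..c, |f x| = -∫ x in b..c, f x := by
    rw [← integral_neg]
    exact integral_congr fun x hx => abs_of_nonpos (hneg x (uIcc_of_le hbc ▸ hx))
  rw [← integral_add_adjacent_intervals hf₁.abs hf₂.abs, h₁, h₂, sub_eq_add_neg]

noncomputable section

def T4Left (x : ℝ) : ℝ := x ^ 2 * (x - 1/3) * (x - 3/5) / 24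

def T4 (x : ℝ) : ℝ :=
  if x < 1/2 then T4Left x else (x - 1) ^ 2 * (x - 2/3) * (x - 2/5) / 24

def T4LeftAntideriv (x : ℝ) : ℝ := x ^ 5 / 120 - 7 * x ^ 4 / 720 + x ^ 3 / 360

end

theorem continuous_T4Left : Continuous T4Left := by
  unfold T4Left; fun_prop

theorem T4_one_sub (x : ℝ) : T4 (1 - x) = T4 x := by
  unfold T4 T4Left
  rcases lt_trichotomy x (1/2) with hx | rfl | hx
  · rw [if_neg (by linarith), if_pos hx]; ring
  · norm_num
  · rw [if_pos (by linarith), if_neg (by linarith)]; ring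

theorem eqOn_T4_T4Left : EqOn T4 T4Left (Icc 0 (1/2)) := by
  intro x hx
  unfold T4
  split_ifs with h
  · rfl
  · rw [le_antisymm hx.2 (not_lt.mp h)]; norm_num [T4Left]

theorem T4Left_nonneg {x : ℝ} (hx : x ∈ Icc (0 : ℝ) (1/3)) : 0 ≤ T4Left x := by
  have h : x ^ 2 * (x - 1/3) ≤ 0 :=
    mul_nonpos_of_nonneg_of_nonpos (sq_nonneg x) (by linarith [hx.2])
  exact div_nonneg (mul_nonneg_of_nonpos_of_nonpos h (by linarith [hx.2])) (by norm_num)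

theorem T4Left_nonpos {x : ℝ} (hx : x ∈ Icc (1/3 : ℝ) (1/2)) : T4Left x ≤ 0 := by
  have h : 0 ≤ x ^ 2 * (x - 1/3) := mul_nonneg (sq_nonneg x) (by linarith [hx.1])
  exact div_nonpos_of_nonpos_of_nonneg (mul_nonpos_of_nonneg_of_nonpos h (by linarith [hx.2]))
    (by norm_num)

theorem hasDerivAt_T4LeftAntideriv (x : ℝ) : HasDerivAt T4LeftAntideriv (T4Left x) x := by
  unfold T4LeftAntideriv T4Left
  exact ((((hasDerivAt_pow 5 x).div_const 120).sub
    (((hasDerivAt_pow 4 x).const_mul 7).div_const 720)).add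
      ((hasDerivAt_pow 3 x).div_const 360)).congr_deriv (by push_cast; ring)

theorem integral_T4Left (a b : ℝ) :
    ∫ x in a..b, T4Left x = T4LeftAntideriv b - T4LeftAntideriv a :=
  integral_eq_sub_of_hasDerivAt (fun x _ => hasDerivAt_T4LeftAntideriv x)
    (continuous_T4Left.intervalIntegrable a b)

theorem T4_abs_integral :
    (∫ x in (0:ℝ)..1,
      |if x < 1/2 then x ^ 2 * (x - 1/3) * (x - 3/5) / 24
        else (x - 1) ^ 2 * (x - 2/3) * (x - 2/5) / 24|) = 1 / 14580 := by
  have heq : EqOn (fun x => |T4 x|) (fun x => |T4Left x|) (uIcc 0 (1/2)) := fun x hx =>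
    congrArg abs (eqOn_T4_T4Left (uIcc_of_le (by norm_num : (0:ℝ) ≤ 1/2) ▸ hx))
  have hint : IntervalIntegrable (fun x => |T4 x|) volume 0 (1/2) :=
    (continuous_T4Left.abs.continuousOn.congr heq).intervalIntegrable
  show ∫ x in (0:ℝ)..1, |T4 x| = 1 / 14580
  calc ∫ x in (0:ℝ)..1, |T4 x|
      = 2 * ∫ x in (0:ℝ)..1/2, |T4 x| := by
        have hsymm : ∀ x, |T4 (0 + 1 - x)| = |T4 x| := fun x => by rw [zero_add, T4_one_sub]
        rw [integral_eq_two_mul_integral_of_symm hsymm (by rwa [zero_add]), zero_add]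
    _ = 2 * ∫ x in (0:ℝ)..1/2, |T4Left x| := by rw [integral_congr heq]
    _ = 2 * ((∫ x in (0:ℝ)..1/3, T4Left x) - ∫ x in (1/3:ℝ)..1/2, T4Left x) := by
        rw [integral_abs_eq_sub_of_sign_change (by norm_num) (by norm_num)
          (fun _ => T4Left_nonneg) (fun _ => T4Left_nonpos)
          (continuous_T4Left.intervalIntegrable _ _) (continuous_T4Left.intervalIntegrable _ _)]
    _ = 1 / 14580 := by
        rw [integral_T4Left, integral_T4Left]; norm_num [T4LeftAntideriv]
end

section
/- ∫₀¹ |T₅(x)| dx = 1/115200, where T₅(x) = -x³(x-1/2)(x-2/3)/120 for x ∈ [0,1/2) and T₅(x) = -(x-1)³(x-1/2)(x-1/3)/120 for x ∈ [1/2,1]. -/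
/-!
On `[0, 1/2]` the kernel is `-q(x)` with `q(x) = x³(x - 1/2)(x - 2/3)/120 ≥ 0`, and on `[1/2, 1]`
it is `q(1 - x)`. Hence `∫₀¹ |T₅| = 2 ∫₀^{1/2} q`, and `q` has the primitive
`(x⁶/6 - 7x⁵/30 + x⁴/12)/120`, which takes the value `1/230400` at `1/2`.
-/

open intervalIntegral Set

noncomputable def T5 (x : ℝ) : ℝ :=
  if x < 1/2 then -(x ^ 3 * (x - 1/2) * (x - 2/3)) / 120
  else -((x - 1) ^ 3 * (x - 1/2) * (x - 1/3)) / 120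

noncomputable def halfKernel (x : ℝ) : ℝ := x ^ 3 * (x - 1/2) * (x - 2/3) / 120

lemma hasDerivAt_halfKernel_antideriv (x : ℝ) :
    HasDerivAt (fun x : ℝ => (x ^ 6 / 6 - 7/30 * x ^ 5 + x ^ 4 / 12) / 120) (halfKernel x) x := by
  have := ((((hasDerivAt_pow 6 x).div_const 6).sub ((hasDerivAt_pow 5 x).const_mul (7/30))).add
    ((hasDerivAt_pow 4 x).div_const 12)).div_const 120
  refine this.congr_deriv ?_
  simp only [halfKernel]; push_cast; ring

lemma continuous_halfKernel : Continuous halfKernel := by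
  unfold halfKernel; fun_prop

lemma integral_halfKernel : ∫ x in (0:ℝ)..1/2, halfKernel x = 1 / 230400 := by
  rw [integral_eq_sub_of_hasDerivAt (fun x _ => hasDerivAt_halfKernel_antideriv x)
    (continuous_halfKernel.intervalIntegrable _ _)]
  norm_num

lemma halfKernel_nonneg {x : ℝ} (h₀ : 0 ≤ x) (h₁ : x ≤ 1/2) : 0 ≤ halfKernel x := by
  have : 0 ≤ x ^ 3 * (1/2 - x) * (2/3 - x) := by
    have := pow_nonneg h₀ 3
    apply mul_nonneg (mul_nonneg _ _) <;> linarith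
  unfold halfKernel
  linarith

lemma T5_of_lt {x : ℝ} (h : x < 1/2) : T5 x = -halfKernel x := by
  simp only [T5, halfKernel, if_pos h]; ring

lemma T5_of_le {x : ℝ} (h : 1/2 ≤ x) : T5 x = halfKernel (1 - x) := by
  simp only [T5, halfKernel, if_neg h.not_gt]; ring

lemma abs_T5_eqOn_left : EqOn (fun x => |T5 x|) halfKernel (uIcc 0 (1/2)) := by
  intro x hx
  rw [uIcc_of_le (by norm_num)] at hx
  show |T5 x| = _
  rcases hx.2.lt_or_eq with h | rfl
  · rw [T5_of_lt h, abs_neg, abs_of_nonneg (halfKernel_nonneg hx.1 hx.2)]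
  · norm_num [T5_of_le, halfKernel]

lemma abs_T5_eqOn_right : EqOn (fun x => |T5 x|) (fun x => halfKernel (1 - x)) (uIcc (1/2) 1) := by
  intro x hx
  rw [uIcc_of_le (by norm_num)] at hx
  show |T5 x| = _
  rw [T5_of_le hx.1, abs_of_nonneg (halfKernel_nonneg (by linarith [hx.2]) (by linarith [hx.1]))]

theorem T5_abs_integral :
    (∫ x in (0:ℝ)..1,
      |if x < 1/2 then -(x ^ 3 * (x - 1/2) * (x - 2/3)) / 120
        else -((x - 1) ^ 3 * (x - 1/2) * (x - 1/3)) / 120|) = 1 / 115200 := by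
  change ∫ x in (0:ℝ)..1, |T5 x| = _
  have hl : IntervalIntegrable (fun x => |T5 x|) MeasureTheory.volume 0 (1/2) :=
    (intervalIntegrable_congr (abs_T5_eqOn_left.mono uIoc_subset_uIcc)).2
      (continuous_halfKernel.intervalIntegrable _ _)
  have hr : IntervalIntegrable (fun x => |T5 x|) MeasureTheory.volume (1/2) 1 :=
    (intervalIntegrable_congr (abs_T5_eqOn_right.mono uIoc_subset_uIcc)).2
      ((continuous_halfKernel.comp (continuous_sub_left 1)).intervalIntegrable _ _)
  rw [← integral_add_adjacent_intervals hl hr, integral_congr abs_T5_eqOn_left,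
    integral_congr abs_T5_eqOn_right, integral_comp_sub_left halfKernel]
  norm_num [integral_halfKernel]
end

section
/- max over x ∈ [0,1] of |T₂(x)| equals 1/40, where T₂(x) = x²/2 - 7x/30 + 1/60 for x ∈ [0,1/2) and T₂(x) = x²/2 - 23x/30 + 17/60 for x ∈ [1/2,1]. -/
/-!
On `[0, 1/2)` the kernel is the quadratic `q x = x² / 2 - 7x / 30 + 1/60`, and on `[1/2, 1]` it is
`q (1 - x)`, so it suffices to bound `q` on `[0, 1/2]`. There `1/40 - q x = (1/2 - x)(x + 1/30) / 2 ≥ 0`,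
with equality at `x = 1/2`, while `q x ≥ q (7/30) = -19/1800 > -1/40`.
-/

namespace CorrectedSimpson

noncomputable def kernelLeft (x : ℝ) : ℝ := x ^ 2 / 2 - 7 * x / 30 + 1 / 60

theorem kernelLeft_one_sub (x : ℝ) :
    kernelLeft (1 - x) = x ^ 2 / 2 - 23 * x / 30 + 17 / 60 := by
  unfold kernelLeft; ring

theorem one_div_forty_sub_kernelLeft (x : ℝ) :
    1 / 40 - kernelLeft x = (1 / 2 - x) * (x + 1 / 30) / 2 := by
  unfold kernelLeft; ring

theorem kernelLeft_eq_sq (x : ℝ) : kernelLeft x = (x - 7 / 30) ^ 2 / 2 - 19 / 1800 := by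
  unfold kernelLeft; ring

theorem abs_kernelLeft_le {x : ℝ} (hx₀ : 0 ≤ x) (hx₁ : x ≤ 1 / 2) : |kernelLeft x| ≤ 1 / 40 := by
  rw [abs_le]
  constructor
  · rw [kernelLeft_eq_sq]
    nlinarith [sq_nonneg (x - 7 / 30)]
  · have h := one_div_forty_sub_kernelLeft x
    have : 0 ≤ (1 / 2 - x) * (x + 1 / 30) := mul_nonneg (by linarith) (by linarith)
    linarith

end CorrectedSimpson

theorem T2_abs_max :
    IsGreatest ((fun x : ℝ =>
      |if x < 1/2 then x ^ 2 / 2 - 7 * x / 30 + 1 / 60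
        else x ^ 2 / 2 - 23 * x / 30 + 17 / 60|) '' Set.Icc 0 1) (1 / 40) := by
  refine ⟨⟨1 / 2, ⟨by norm_num, by norm_num⟩, by norm_num⟩, ?_⟩
  rintro _ ⟨x, ⟨hx₀, hx₁⟩, rfl⟩
  dsimp only
  split_ifs with hx
  · exact CorrectedSimpson.abs_kernelLeft_le hx₀ hx.le
  · rw [← CorrectedSimpson.kernelLeft_one_sub]
    exact CorrectedSimpson.abs_kernelLeft_le (by linarith) (by linarith)
end

section
/- max over x ∈ [0,1] of |T₄(x)| equals 1/5760, where T₄(x) = x²(x-1/3)(x-3/5)/24 for x ∈ [0,1/2) and T₄(x) = (x-1)²(x-2/3)(x-2/5)/24 for x ∈ [1/2,1]. -/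
/-!
The right branch of `T₄` is the reflection `x ↦ 1 - x` of the left one, so it suffices to bound
the quartic `q x = x²(x - 1/3)(x - 3/5)/24` on `[0, 1/2]`. There `q` has critical points `0, 1/5, 1/2`;
the minimum `q (1/2) = -1/5760` is a double root of `q + 1/5760`, which factors as `(x - 1/2)²` times
a positive definite quadratic, and the local maximum `q (1/5) = 1/11250` lies well below `1/5760`.
-/

namespace CorrectedSimpson

noncomputable def leftKernel (x : ℝ) : ℝ := x ^ 2 * (x - 1/3) * (x - 3/5) / 24

lemma leftKernel_add_eq (x : ℝ) :
    leftKernel x + 1 / 5760 = (x - 1/2) ^ 2 * (x ^ 2 + x / 15 + 1 / 60) / 24 := by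
  unfold leftKernel; ring

lemma neg_le_leftKernel (x : ℝ) : -(1 / 5760) ≤ leftKernel x := by
  have h : 0 ≤ (x - 1/2) ^ 2 * (x ^ 2 + x / 15 + 1 / 60) / 24 := by
    have : 0 < x ^ 2 + x / 15 + 1 / 60 := by nlinarith [sq_nonneg (x + 1/30)]
    positivity
  linarith [leftKernel_add_eq x]

lemma leftKernel_le {x : ℝ} (hx : x ∈ Set.Icc (0 : ℝ) (1/2)) : leftKernel x ≤ 1 / 5760 := by
  obtain ⟨hx0, hx1⟩ := hx
  unfold leftKernel
  nlinarith [mul_nonneg (sq_nonneg (x - 1/5)) (mul_nonneg hx0 (by linarith : (0:ℝ) ≤ 1/2 - x))]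

lemma abs_leftKernel_le {x : ℝ} (hx : x ∈ Set.Icc (0 : ℝ) (1/2)) : |leftKernel x| ≤ 1 / 5760 :=
  abs_le.2 ⟨neg_le_leftKernel x, leftKernel_le hx⟩

lemma leftKernel_one_half : leftKernel (1/2) = -(1 / 5760) := by
  norm_num [leftKernel]

lemma leftKernel_one_sub (x : ℝ) :
    leftKernel (1 - x) = (x - 1) ^ 2 * (x - 2/3) * (x - 2/5) / 24 := by
  unfold leftKernel; ring

end CorrectedSimpson

open CorrectedSimpson in
theorem T4_abs_max :
    IsGreatest ((fun x : ℝ =>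
      |if x < 1/2 then x ^ 2 * (x - 1/3) * (x - 3/5) / 24
        else (x - 1) ^ 2 * (x - 2/3) * (x - 2/5) / 24|) '' Set.Icc 0 1) (1 / 5760) := by
  simp only [← leftKernel_one_sub]
  change IsGreatest ((fun x : ℝ => |if x < 1/2 then leftKernel x else leftKernel (1 - x)|) ''
    Set.Icc 0 1) (1 / 5760)
  refine ⟨⟨1/2, by norm_num, ?_⟩, ?_⟩
  · norm_num [leftKernel_one_half]
  · rintro _ ⟨x, ⟨hx0, hx1⟩, rfl⟩
    dsimp only
    split_ifs with h
    · exact abs_leftKernel_le ⟨hx0, h.le⟩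
    · exact abs_leftKernel_le ⟨by linarith, by linarith⟩
end

section
/- Let f ∈ C^k([0,1]) for some k ∈ {2,3,4,5}, and suppose γ ≤ f⁽ᵏ⁾(x) ≤ Γ for all x ∈ [0,1]. Then the remainder R_k(f) = ∫₀¹ f(x) dx - (7f(0)+16f(1/2)+7f(1))/30 + (f'(1)-f'(0))/60 satisfies |R_k(f)| ≤ (Γ - γ)/2 · C_k, where C₂ = 19√19/10125, C₃ = 253/360000, C₄ = 1/14580, C₅ = 1/115200. -/
open Set MeasureTheory intervalIntegral

/-- The constants `C_k` from the paper. -/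
noncomputable def peanoC : ℕ → ℝ
  | 2 => 19 * Real.sqrt 19 / 10125
  | 3 => 253 / 360000
  | 4 => 1 / 14580
  | 5 => 1 / 115200
  | _ => 0

/-- basis function: `(c-t)^n / n!` for `n ≥ 0`, else `0`. -/
noncomputable def eb (c : ℝ) (n : ℤ) (t : ℝ) : ℝ :=
  if 0 ≤ n then (c - t) ^ n.toNat / (n.toNat).factorial else 0

lemma eb_hasDerivAt (c : ℝ) (n : ℤ) (t : ℝ) :
    HasDerivAt (fun s => eb c n s) (-(eb c (n - 1) t)) t := by
  rcases lt_trichotomy n 0 with h | h | h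
  · have h1 : ¬ (0:ℤ) ≤ n := by omega
    have h2 : ¬ (0:ℤ) ≤ n - 1 := by omega
    simp only [eb, if_neg h1, if_neg h2, neg_zero]
    exact hasDerivAt_const t 0
  · subst h
    have h2 : ¬ (0:ℤ) ≤ (0:ℤ) - 1 := by omega
    simp only [eb, if_pos le_rfl, if_neg h2, Int.toNat_zero, pow_zero, Nat.factorial_zero,
      Nat.cast_one, div_one, neg_zero]
    exact hasDerivAt_const t 1
  · have h1 : (0:ℤ) ≤ n := le_of_lt h
    have h2 : (0:ℤ) ≤ n - 1 := by omega
    obtain ⟨m, rfl⟩ : ∃ m : ℕ, n = (m : ℤ) + 1 := ⟨(n-1).toNat, by omega⟩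
    have htn : ((m:ℤ) + 1).toNat = m + 1 := by omega
    have htn' : ((m:ℤ) + 1 - 1).toNat = m := by omega
    simp only [eb, if_pos h1, if_pos h2, htn, htn']
    have hd : HasDerivAt (fun s => (c - s) ^ (m+1)) ((↑(m+1) * (c - t) ^ m) * (-1)) t :=
      ((hasDerivAt_id t).const_sub c).pow (m+1)
    have hdd := hd.div_const ((m+1).factorial : ℝ)
    refine hdd.congr_deriv ?_
    have hfac : ((m+1).factorial : ℝ) = (m+1) * (m).factorial := by
      rw [Nat.factorial_succ]; push_cast; ring
    rw [hfac]
    have hm : ((m).factorial : ℝ) ≠ 0 := by positivity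
    field_simp
    push_cast
    ring

/-- The Peano kernel pieces: `w = 8/15` on `[0,1/2]`, `w = 0` on `[1/2,1]`. -/
noncomputable def ker (w : ℝ) (K j : ℤ) (t : ℝ) : ℝ :=
  (-1) ^ j * (eb 1 (K - j) t - w * eb (1/2) (K - 1 - j) t
    - (7/30) * eb 1 (K - 1 - j) t + (1/60) * eb 1 (K - 2 - j) t)

lemma ker_hasDerivAt (w : ℝ) (K j : ℤ) (t : ℝ) :
    HasDerivAt (fun s => ker w K j s) (ker w K (j + 1) t) t := by
  have h1 := eb_hasDerivAt 1 (K - j) t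
  have h2 := eb_hasDerivAt (1/2) (K - 1 - j) t
  have h3 := eb_hasDerivAt 1 (K - 1 - j) t
  have h4 := eb_hasDerivAt 1 (K - 2 - j) t
  have H := ((((h1.sub (h2.const_mul w)).sub (h3.const_mul (7/30))).add
    (h4.const_mul (1/60))).const_mul ((-1:ℝ) ^ j))
  refine H.congr_deriv ?_
  have e1 : K - (j + 1) = K - j - 1 := by ring
  have e2 : K - 1 - (j + 1) = K - 1 - j - 1 := by ring
  have e3 : K - 2 - (j + 1) = K - 2 - j - 1 := by ring
  have e4 : (-1:ℝ) ^ (j + 1) = (-1) ^ j * (-1) := by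
    rw [zpow_add_one₀ (by norm_num)]
  rw [ker, e1, e2, e3, e4]
  ring

lemma ker_continuous (w : ℝ) (K j : ℤ) : Continuous (fun s => ker w K j s) :=
  continuous_iff_continuousAt.2 fun t => (ker_hasDerivAt w K j t).continuousAt

lemma ker_top (w : ℝ) (K : ℤ) (t : ℝ) : ker w K K t = (-1) ^ K := by
  have h0 : K - K = 0 := by ring
  have h1 : ¬ (0:ℤ) ≤ K - 1 - K := by omega
  have h2 : ¬ (0:ℤ) ≤ K - 2 - K := by omega
  simp [ker, h0, eb, h1, h2]

lemma ker_moment (w : ℝ) (K : ℤ) (a b : ℝ) :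
    ∫ t in a..b, ker w K 0 t = ker w K (-1) b - ker w K (-1) a := by
  apply intervalIntegral.integral_eq_sub_of_hasDerivAt
  · intro t _
    simpa using ker_hasDerivAt w K (-1) t
  · exact (ker_continuous w K 0).intervalIntegrable a b

section
variable (k : ℕ) (f : ℝ → ℝ)

/-- boundary bilinear form for integration by parts -/
noncomputable def bnd (w : ℝ) (t : ℝ) : ℝ :=
  ∑ j ∈ Finset.range k, (-1:ℝ) ^ j * ker w k j t *
    iteratedDerivWithin (k - 1 - j) f (Icc 0 1) t

lemma ibp (hk : 1 ≤ k) (hf : ContDiffOn ℝ k f (Icc 0 1)) (w : ℝ)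
    (a b : ℝ) (h0 : 0 ≤ a) (hab : a ≤ b) (hb : b ≤ 1) :
    ∫ t in a..b, ker w k 0 t * iteratedDerivWithin k f (Icc 0 1) t
      = (∫ t in a..b, f t) + bnd k f w b - bnd k f w a := by
  have hUD : UniqueDiffOn ℝ (Icc (0:ℝ) 1) := uniqueDiffOn_Icc one_pos
  set F : ℕ → ℝ → ℝ := fun j => iteratedDerivWithin j f (Icc 0 1) with hF
  have hFcont : ∀ j, j ≤ k → ContinuousOn (F j) (Icc 0 1) := fun j hj =>
    hf.continuousOn_iteratedDerivWithin (by exact_mod_cast hj) hUD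
  have hFderiv : ∀ j, j < k → ∀ t ∈ Ioo (0:ℝ) 1, HasDerivAt (F j) (F (j+1) t) t := by
    intro j hj t ht
    have hd : DifferentiableOn ℝ (F j) (Icc 0 1) :=
      hf.differentiableOn_iteratedDerivWithin (by exact_mod_cast hj) hUD
    have htm : Icc (0:ℝ) 1 ∈ nhds t := Icc_mem_nhds ht.1 ht.2
    have ht1 : t ∈ Icc (0:ℝ) 1 := ⟨le_of_lt ht.1, le_of_lt ht.2⟩
    have h1 : HasDerivAt (F j) (derivWithin (F j) (Icc 0 1) t) t :=
      ((hd t ht1).hasDerivWithinAt).hasDerivAt htm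
    rwa [hF, ← iteratedDerivWithin_succ] at h1
  have hF0 : F 0 = f := by simp [hF, iteratedDerivWithin_zero]
  have hconn : Icc a b ⊆ Icc (0:ℝ) 1 := Icc_subset_Icc h0 hb
  have hoo : Ioo a b ⊆ Ioo (0:ℝ) 1 := Ioo_subset_Ioo h0 hb
  have hBderiv : ∀ t ∈ Ioo (0:ℝ) 1,
      HasDerivAt (fun s => bnd k f w s) (ker w k 0 t * F k t - f t) t := by
    intro t ht
    set c : ℕ → ℝ := fun j => (-1:ℝ) ^ j * ker w k j t * F (k - j) t with hc
    have hterm : ∀ j ∈ Finset.range k,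
        HasDerivAt (fun s => (-1:ℝ) ^ j * ker w k j s * F (k - 1 - j) s)
          (c j - c (j+1)) t := by
      intro j hj
      have hjk : j < k := Finset.mem_range.1 hj
      have hker := (ker_hasDerivAt w k j t).const_mul ((-1:ℝ)^j)
      have hFd := hFderiv (k - 1 - j) (by omega) t ht
      have hmul := hker.mul hFd
      have e1 : k - 1 - j + 1 = k - j := by omega
      rw [e1] at hmul
      refine hmul.congr_deriv ?_
      simp only [hc]
      have e2 : k - (j + 1) = k - 1 - j := by omega
      rw [e2]
      push_cast
      rw [pow_succ]
      ring
    have hsum := HasDerivAt.sum hterm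
    have htel : ∑ j ∈ Finset.range k, (c j - c (j+1)) = ker w k 0 t * F k t - f t := by
      rw [Finset.sum_range_sub' c k]
      simp only [hc, pow_zero, one_mul, Nat.sub_self, Nat.sub_zero, Nat.cast_zero, hF0]
      rw [ker_top w k t]
      have hz : ((-1:ℝ))^(k:ℤ) = (-1:ℝ)^(k:ℕ) := zpow_natCast _ _
      rw [hz]
      have h1 : (-1:ℝ)^k * (-1:ℝ)^k = 1 := by
        rw [← pow_add]; exact (neg_one_pow_eq_one_iff_even (by norm_num)).2 ⟨k, rfl⟩
      linear_combination (-(f t)) * h1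
    rw [htel] at hsum
    refine HasDerivAt.congr_of_eventuallyEq hsum (Filter.Eventually.of_forall fun s => ?_)
    simp [bnd, Finset.sum_apply]
    rfl
  have hBcont : ContinuousOn (fun s => bnd k f w s) (Icc a b) := by
    unfold bnd
    apply continuousOn_finset_sum
    intro j hj
    exact ((continuous_const.mul (ker_continuous w k j)).continuousOn).mul
      ((hFcont (k-1-j) (by omega)).mono hconn)
  have hintg : IntervalIntegrable (fun t => ker w k 0 t * F k t - f t) volume a b := by
    apply ContinuousOn.intervalIntegrable
    rw [uIcc_of_le hab]
    exact ((ker_continuous w k 0).continuousOn.mul ((hFcont k le_rfl).mono hconn)).sub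
      ((hf.continuousOn).mono hconn)
  have key := intervalIntegral.integral_eq_sub_of_hasDeriv_right_of_le hab hBcont
    (fun x hx => (hBderiv x (hoo hx)).hasDerivWithinAt) hintg
  have hint1 : IntervalIntegrable (fun t => ker w k 0 t * F k t) volume a b := by
    apply ContinuousOn.intervalIntegrable
    rw [uIcc_of_le hab]
    exact (ker_continuous w k 0).continuousOn.mul ((hFcont k le_rfl).mono hconn)
  have hint2 : IntervalIntegrable f volume a b := by
    apply ContinuousOn.intervalIntegrable
    rw [uIcc_of_le hab]
    exact (hf.continuousOn).mono hconn
  rw [intervalIntegral.integral_sub hint1 hint2] at key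
  linarith [key]

end

lemma piece_bound (w : ℝ) (K : ℤ) (g : ℝ → ℝ) (hg : ContinuousOn g (Icc 0 1)) (M : ℝ)
    (hM : ∀ t ∈ Icc (0:ℝ) 1, |g t| ≤ M)
    (a b : ℝ) (h0 : 0 ≤ a) (hab : a ≤ b) (hb : b ≤ 1)
    (hsgn : (∀ t ∈ Icc a b, 0 ≤ ker w K 0 t) ∨ (∀ t ∈ Icc a b, ker w K 0 t ≤ 0)) :
    |∫ t in a..b, ker w K 0 t * g t| ≤ M * |ker w K (-1) b - ker w K (-1) a| := by
  have hM0 : 0 ≤ M := le_trans (abs_nonneg _) (hM 0 (by constructor <;> norm_num))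
  have hconn : Icc a b ⊆ Icc (0:ℝ) 1 := Icc_subset_Icc h0 hb
  have hint1 : IntervalIntegrable (fun t => ker w K 0 t * g t) volume a b := by
    apply ContinuousOn.intervalIntegrable
    rw [uIcc_of_le hab]
    exact (ker_continuous w K 0).continuousOn.mul (hg.mono hconn)
  have hint2 : IntervalIntegrable (fun t => M * ker w K 0 t) volume a b :=
    (continuous_const.mul (ker_continuous w K 0)).intervalIntegrable a b
  have hint3 : IntervalIntegrable (fun t => -M * ker w K 0 t) volume a b :=
    (continuous_const.mul (ker_continuous w K 0)).intervalIntegrable a b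
  rw [← ker_moment]
  rcases hsgn with hs | hs
  · have h1 : (∫ t in a..b, ker w K 0 t * g t) ≤ ∫ t in a..b, M * ker w K 0 t := by
      apply intervalIntegral.integral_mono_on hab hint1 hint2
      intro t ht
      have h := hM t (hconn ht)
      have hP := hs t ht
      rw [abs_le] at h
      nlinarith [h.2, hP]
    have h2 : (∫ t in a..b, -M * ker w K 0 t) ≤ ∫ t in a..b, ker w K 0 t * g t := by
      apply intervalIntegral.integral_mono_on hab hint3 hint1
      intro t ht
      have h := hM t (hconn ht)
      have hP := hs t ht
      rw [abs_le] at h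
      nlinarith [h.1, hP]
    rw [intervalIntegral.integral_const_mul] at h1 h2
    have hmom : 0 ≤ ∫ t in a..b, ker w K 0 t :=
      intervalIntegral.integral_nonneg hab hs
    rw [abs_of_nonneg hmom, abs_le]
    constructor <;> nlinarith
  · have h1 : (∫ t in a..b, ker w K 0 t * g t) ≤ ∫ t in a..b, -M * ker w K 0 t := by
      apply intervalIntegral.integral_mono_on hab hint1 hint3
      intro t ht
      have h := hM t (hconn ht)
      have hP := hs t ht
      rw [abs_le] at h
      nlinarith [h.1, hP]
    have h2 : (∫ t in a..b, M * ker w K 0 t) ≤ ∫ t in a..b, ker w K 0 t * g t := by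
      apply intervalIntegral.integral_mono_on hab hint2 hint1
      intro t ht
      have h := hM t (hconn ht)
      have hP := hs t ht
      rw [abs_le] at h
      nlinarith [h.2, hP]
    rw [intervalIntegral.integral_const_mul] at h1 h2
    have hmom : (∫ t in a..b, ker w K 0 t) ≤ 0 := by
      have h3 : (0:ℝ) ≤ ∫ t in a..b, -(ker w K 0 t) :=
        intervalIntegral.integral_nonneg hab (fun t ht => by simpa using hs t ht)
      rw [intervalIntegral.integral_neg] at h3
      linarith
    rw [abs_of_nonpos hmom, abs_le]
    constructor <;> nlinarith

lemma sub_mean (w : ℝ) (K : ℤ) (G : ℝ → ℝ) (m : ℝ) (hG : ContinuousOn G (Icc 0 1))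
    (a b : ℝ) (h0 : 0 ≤ a) (hab : a ≤ b) (hb : b ≤ 1) :
    ∫ t in a..b, ker w K 0 t * G t
      = (∫ t in a..b, ker w K 0 t * (G t - m))
        + m * (ker w K (-1) b - ker w K (-1) a) := by
  have hconn : Icc a b ⊆ Icc (0:ℝ) 1 := Icc_subset_Icc h0 hb
  have h1 : IntervalIntegrable (fun t => ker w K 0 t * (G t - m)) volume a b := by
    apply ContinuousOn.intervalIntegrable
    rw [uIcc_of_le hab]
    exact (ker_continuous w K 0).continuousOn.mul ((hG.mono hconn).sub continuousOn_const)
  have h2 : IntervalIntegrable (fun t => m * ker w K 0 t) volume a b :=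
    (continuous_const.mul (ker_continuous w K 0)).intervalIntegrable a b
  have h3 : (∫ t in a..b, ker w K 0 t * G t)
      = ∫ t in a..b, (ker w K 0 t * (G t - m) + m * ker w K 0 t) :=
    intervalIntegral.integral_congr (fun t _ => by ring)
  rw [h3, intervalIntegral.integral_add h1 h2, intervalIntegral.integral_const_mul, ker_moment]

lemma tn1 : Int.toNat 1 = 1 := rfl
lemma tn2 : Int.toNat 2 = 2 := rfl
lemma tn3 : Int.toNat 3 = 3 := rfl
lemma tn4 : Int.toNat 4 = 4 := rfl
lemma tn5 : Int.toNat 5 = 5 := rfl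
lemma tn6 : Int.toNat 6 = 6 := rfl

lemma sqrt19_sq : Real.sqrt 19 ^ 2 = 19 := Real.sq_sqrt (by norm_num)
lemma sqrt19_gt : (4:ℝ) < Real.sqrt 19 := by
  nlinarith [sqrt19_sq, Real.sqrt_nonneg 19]
lemma sqrt19_lt : Real.sqrt 19 < 5 := by
  nlinarith [sqrt19_sq, Real.sqrt_nonneg 19]

set_option maxHeartbeats 1000000 in
lemma kd1 : ker (8/15) 2 (-1) ((7 - Real.sqrt 19)/30) - ker (8/15) 2 (-1) (0) = -(7/20250) + (19/81000)*Real.sqrt 19 := by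
  norm_num [ker, eb, Nat.factorial, tn1, tn2, tn3, tn4, tn5, tn6]
  linear_combination ((-(1/162000))*Real.sqrt 19) * sqrt19_sq

set_option maxHeartbeats 1000000 in
lemma ksg1 : ∀ t ∈ Icc ((0):ℝ) ((7 - Real.sqrt 19)/30), 0 ≤ ker (8/15) 2 0 t := by
  intro t ht
  obtain ⟨ht1, ht2⟩ := ht
  have hfac : ker (8/15) 2 0 t = (30*t^2 - 14*t + 1)/60 := by
    norm_num [ker, eb, Nat.factorial, tn1, tn2, tn3, tn4, tn5, tn6]; ring
  rw [hfac]
  nlinarith [sqrt19_sq, mul_nonneg (by linarith [sqrt19_gt, sqrt19_lt] : (0:ℝ) ≤ 7 - 30*t - Real.sqrt 19)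
    (by linarith [sqrt19_gt, sqrt19_lt] : (0:ℝ) ≤ 7 - 30*t + Real.sqrt 19)]

set_option maxHeartbeats 1000000 in
lemma kd2 : ker (8/15) 2 (-1) ((7 + Real.sqrt 19)/30) - ker (8/15) 2 (-1) ((7 - Real.sqrt 19)/30) = -((19/40500)*Real.sqrt 19) := by
  norm_num [ker, eb, Nat.factorial, tn1, tn2, tn3, tn4, tn5, tn6]
  linear_combination ((1/81000)*Real.sqrt 19) * sqrt19_sq

set_option maxHeartbeats 1000000 in
lemma ksg2 : ∀ t ∈ Icc (((7 - Real.sqrt 19)/30):ℝ) ((7 + Real.sqrt 19)/30), ker (8/15) 2 0 t ≤ 0 := by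
  intro t ht
  obtain ⟨ht1, ht2⟩ := ht
  have hfac : ker (8/15) 2 0 t = (30*t^2 - 14*t + 1)/60 := by
    norm_num [ker, eb, Nat.factorial, tn1, tn2, tn3, tn4, tn5, tn6]; ring
  rw [hfac]
  nlinarith [sqrt19_sq, mul_nonneg (by linarith [sqrt19_gt, sqrt19_lt] : (0:ℝ) ≤ 30*t - 7 + Real.sqrt 19)
    (by linarith [sqrt19_gt, sqrt19_lt] : (0:ℝ) ≤ 7 + Real.sqrt 19 - 30*t)]

set_option maxHeartbeats 1000000 in
lemma kd3 : ker (8/15) 2 (-1) (1/2) - ker (8/15) 2 (-1) ((7 + Real.sqrt 19)/30) = (7/20250) + (19/81000)*Real.sqrt 19 := by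
  norm_num [ker, eb, Nat.factorial, tn1, tn2, tn3, tn4, tn5, tn6]
  linear_combination ((-(1/162000))*Real.sqrt 19) * sqrt19_sq

set_option maxHeartbeats 1000000 in
lemma ksg3 : ∀ t ∈ Icc (((7 + Real.sqrt 19)/30):ℝ) (1/2), 0 ≤ ker (8/15) 2 0 t := by
  intro t ht
  obtain ⟨ht1, ht2⟩ := ht
  have hfac : ker (8/15) 2 0 t = (30*t^2 - 14*t + 1)/60 := by
    norm_num [ker, eb, Nat.factorial, tn1, tn2, tn3, tn4, tn5, tn6]; ring
  rw [hfac]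
  nlinarith [sqrt19_sq, mul_nonneg (by linarith [sqrt19_gt, sqrt19_lt] : (0:ℝ) ≤ 30*t - 7 - Real.sqrt 19)
    (by linarith [sqrt19_gt, sqrt19_lt] : (0:ℝ) ≤ 30*t - 7 + Real.sqrt 19)]

set_option maxHeartbeats 1000000 in
lemma kd4 : ker (0) 2 (-1) ((23 - Real.sqrt 19)/30) - ker (0) 2 (-1) (1/2) = (7/20250) + (19/81000)*Real.sqrt 19 := by
  norm_num [ker, eb, Nat.factorial, tn1, tn2, tn3, tn4, tn5, tn6]
  linear_combination ((-(1/162000))*Real.sqrt 19) * sqrt19_sq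

set_option maxHeartbeats 1000000 in
lemma ksg4 : ∀ t ∈ Icc ((1/2):ℝ) ((23 - Real.sqrt 19)/30), 0 ≤ ker (0) 2 0 t := by
  intro t ht
  obtain ⟨ht1, ht2⟩ := ht
  have hfac : ker (0) 2 0 t = (30*t^2 - 46*t + 17)/60 := by
    norm_num [ker, eb, Nat.factorial, tn1, tn2, tn3, tn4, tn5, tn6]; ring
  rw [hfac]
  nlinarith [sqrt19_sq, mul_nonneg (by linarith [sqrt19_gt, sqrt19_lt] : (0:ℝ) ≤ 23 - 30*t - Real.sqrt 19)
    (by linarith [sqrt19_gt, sqrt19_lt] : (0:ℝ) ≤ 23 - 30*t + Real.sqrt 19)]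

set_option maxHeartbeats 1000000 in
lemma kd5 : ker (0) 2 (-1) ((23 + Real.sqrt 19)/30) - ker (0) 2 (-1) ((23 - Real.sqrt 19)/30) = -((19/40500)*Real.sqrt 19) := by
  norm_num [ker, eb, Nat.factorial, tn1, tn2, tn3, tn4, tn5, tn6]
  linear_combination ((1/81000)*Real.sqrt 19) * sqrt19_sq

set_option maxHeartbeats 1000000 in
lemma ksg5 : ∀ t ∈ Icc (((23 - Real.sqrt 19)/30):ℝ) ((23 + Real.sqrt 19)/30), ker (0) 2 0 t ≤ 0 := by
  intro t ht
  obtain ⟨ht1, ht2⟩ := ht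
  have hfac : ker (0) 2 0 t = (30*t^2 - 46*t + 17)/60 := by
    norm_num [ker, eb, Nat.factorial, tn1, tn2, tn3, tn4, tn5, tn6]; ring
  rw [hfac]
  nlinarith [sqrt19_sq, mul_nonneg (by linarith [sqrt19_gt, sqrt19_lt] : (0:ℝ) ≤ 30*t - 23 + Real.sqrt 19)
    (by linarith [sqrt19_gt, sqrt19_lt] : (0:ℝ) ≤ 23 + Real.sqrt 19 - 30*t)]

set_option maxHeartbeats 1000000 in
lemma kd6 : ker (0) 2 (-1) (1) - ker (0) 2 (-1) ((23 + Real.sqrt 19)/30) = -(7/20250) + (19/81000)*Real.sqrt 19 := by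
  norm_num [ker, eb, Nat.factorial, tn1, tn2, tn3, tn4, tn5, tn6]
  linear_combination ((-(1/162000))*Real.sqrt 19) * sqrt19_sq

set_option maxHeartbeats 1000000 in
lemma ksg6 : ∀ t ∈ Icc (((23 + Real.sqrt 19)/30):ℝ) (1), 0 ≤ ker (0) 2 0 t := by
  intro t ht
  obtain ⟨ht1, ht2⟩ := ht
  have hfac : ker (0) 2 0 t = (30*t^2 - 46*t + 17)/60 := by
    norm_num [ker, eb, Nat.factorial, tn1, tn2, tn3, tn4, tn5, tn6]; ring
  rw [hfac]
  nlinarith [sqrt19_sq, mul_nonneg (by linarith [sqrt19_gt, sqrt19_lt] : (0:ℝ) ≤ 30*t - 23 - Real.sqrt 19)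
    (by linarith [sqrt19_gt, sqrt19_lt] : (0:ℝ) ≤ 30*t - 23 + Real.sqrt 19)]

set_option maxHeartbeats 4000000 in
lemma simpson_case_2 (f : ℝ → ℝ) (hf : ContDiffOn ℝ 2 f (Set.Icc 0 1)) (γ Γ : ℝ)
    (hγ : ∀ x ∈ Set.Icc (0:ℝ) 1, γ ≤ iteratedDerivWithin 2 f (Set.Icc 0 1) x)
    (hΓ : ∀ x ∈ Set.Icc (0:ℝ) 1, iteratedDerivWithin 2 f (Set.Icc 0 1) x ≤ Γ) :
    |(∫ x in (0:ℝ)..1, f x) -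
        (7 * f 0 + 16 * f (1/2) + 7 * f 1) / 30
        + (derivWithin f (Set.Icc 0 1) 1 - derivWithin f (Set.Icc 0 1) 0) / 60|
      ≤ (Γ - γ) / 2 * peanoC 2 := by
  have hfc : ContDiffOn ℝ ((2:ℕ):ℕ∞) f (Set.Icc 0 1) := by exact_mod_cast hf
  have hUD : UniqueDiffOn ℝ (Icc (0:ℝ) 1) := uniqueDiffOn_Icc one_pos
  set F : ℝ → ℝ := iteratedDerivWithin 2 f (Icc 0 1) with hFdef
  set m : ℝ := (γ + Γ)/2 with hmdef
  set M : ℝ := (Γ - γ)/2 with hMdef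
  have hFc : ContinuousOn F (Icc 0 1) :=
    hfc.continuousOn_iteratedDerivWithin (by exact_mod_cast le_rfl) hUD
  have hg : ContinuousOn (fun t => F t - m) (Icc 0 1) := hFc.sub continuousOn_const
  have hMg : ∀ t ∈ Icc (0:ℝ) 1, |F t - m| ≤ M := by
    intro t ht
    rw [abs_le]
    constructor
    · have := hγ t ht; rw [hmdef, hMdef]; simp only [hFdef]; linarith
    · have := hΓ t ht; rw [hmdef, hMdef]; simp only [hFdef]; linarith
  have hidP := ibp 2 f (by omega) hfc (8/15) 0 (1/2) (by norm_num) (by norm_num) (by norm_num)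
  have hidQ := ibp 2 f (by omega) hfc 0 (1/2) 1 (by norm_num) (by norm_num) (by norm_num)
  have hfint : ∀ a b : ℝ, 0 ≤ a → a ≤ b → b ≤ 1 → IntervalIntegrable f volume a b := by
    intro a b h0 hab hb
    apply ContinuousOn.intervalIntegrable
    rw [uIcc_of_le hab]
    exact hfc.continuousOn.mono (Icc_subset_Icc h0 hb)
  have hFkint : ∀ (w : ℝ) (a b : ℝ), 0 ≤ a → a ≤ b → b ≤ 1 →
      IntervalIntegrable (fun t => ker w 2 0 t * F t) volume a b := by
    intro w a b h0 hab hb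
    apply ContinuousOn.intervalIntegrable
    rw [uIcc_of_le hab]
    exact (ker_continuous w 2 0).continuousOn.mul (hFc.mono (Icc_subset_Icc h0 hb))
  have hsumf : (∫ t in (0:ℝ)..(1/2), f t) + (∫ t in (1/2:ℝ)..1, f t) = ∫ t in (0:ℝ)..1, f t :=
    intervalIntegral.integral_add_adjacent_intervals
      (hfint 0 (1/2) (by norm_num) (by norm_num) (by norm_num))
      (hfint (1/2) 1 (by norm_num) (by norm_num) (by norm_num))
  have hdw1 : iteratedDerivWithin 1 f (Icc 0 1) 1 = derivWithin f (Icc 0 1) 1 :=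
    congrFun iteratedDerivWithin_one 1
  have hdw0 : iteratedDerivWithin 1 f (Icc 0 1) 0 = derivWithin f (Icc 0 1) 0 :=
    congrFun iteratedDerivWithin_one 0
  simp only [Nat.cast_ofNat] at hidP hidQ
  set s : ℝ := Real.sqrt 19 with hsdef
  have hs2 : s^2 = 19 := Real.sq_sqrt (by norm_num)
  have hs0 : (0:ℝ) ≤ s := Real.sqrt_nonneg _
  have hs4 : 4 < s := by nlinarith
  have hs5 : s < 5 := by nlinarith
  have hB0 : bnd 2 f (8/15) 0
      = (7/30) * f 0 + (1/60) * iteratedDerivWithin 1 f (Icc 0 1) 0 := by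
    simp only [bnd, Finset.sum_range_succ, Finset.sum_range_zero]
    norm_num [ker, eb, Nat.factorial, tn1, tn2, tn3, tn4, tn5, tn6]
    ring
  have hB1 : bnd 2 f 0 1
      = -((7/30) * f 1) + (1/60) * iteratedDerivWithin 1 f (Icc 0 1) 1 := by
    simp only [bnd, Finset.sum_range_succ, Finset.sum_range_zero]
    norm_num [ker, eb, Nat.factorial, tn1, tn2, tn3, tn4, tn5, tn6]
    ring
  have hBm : bnd 2 f (8/15) (1/2) - bnd 2 f 0 (1/2)
      = -((16/30) * f (1/2)) := by
    simp only [bnd, Finset.sum_range_succ, Finset.sum_range_zero]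
    norm_num [ker, eb, Nat.factorial, tn1, tn2, tn3, tn4, tn5, tn6]
    ring
  simp only [← hFdef] at hidP hidQ
  have hsp1a : (∫ t in (0:ℝ)..((7 - s)/30), ker (8/15) 2 0 t * F t)
      + (∫ t in ((7 - s)/30:ℝ)..((7 + s)/30), ker (8/15) 2 0 t * F t)
      = ∫ t in (0:ℝ)..((7 + s)/30), ker (8/15) 2 0 t * F t :=
    intervalIntegral.integral_add_adjacent_intervals
      (hFkint _ _ _ (by linarith) (by linarith) (by linarith))
      (hFkint _ _ _ (by linarith) (by linarith) (by linarith))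
  have hsp1b : (∫ t in (0:ℝ)..((7 + s)/30), ker (8/15) 2 0 t * F t)
      + (∫ t in ((7 + s)/30:ℝ)..(1/2), ker (8/15) 2 0 t * F t)
      = ∫ t in (0:ℝ)..(1/2), ker (8/15) 2 0 t * F t :=
    intervalIntegral.integral_add_adjacent_intervals
      (hFkint _ _ _ (by linarith) (by linarith) (by linarith))
      (hFkint _ _ _ (by linarith) (by linarith) (by linarith))
  have hsp2a : (∫ t in (1/2:ℝ)..((23 - s)/30), ker (0) 2 0 t * F t)
      + (∫ t in ((23 - s)/30:ℝ)..((23 + s)/30), ker (0) 2 0 t * F t)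
      = ∫ t in (1/2:ℝ)..((23 + s)/30), ker (0) 2 0 t * F t :=
    intervalIntegral.integral_add_adjacent_intervals
      (hFkint _ _ _ (by linarith) (by linarith) (by linarith))
      (hFkint _ _ _ (by linarith) (by linarith) (by linarith))
  have hsp2b : (∫ t in (1/2:ℝ)..((23 + s)/30), ker (0) 2 0 t * F t)
      + (∫ t in ((23 + s)/30:ℝ)..(1), ker (0) 2 0 t * F t)
      = ∫ t in (1/2:ℝ)..(1), ker (0) 2 0 t * F t :=
    intervalIntegral.integral_add_adjacent_intervals
      (hFkint _ _ _ (by linarith) (by linarith) (by linarith))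
      (hFkint _ _ _ (by linarith) (by linarith) (by linarith))
  have hsm1 := sub_mean (8/15) 2 F m hFc (0) ((7 - s)/30) (by linarith) (by linarith) (by linarith)
  have hsm2 := sub_mean (8/15) 2 F m hFc ((7 - s)/30) ((7 + s)/30) (by linarith) (by linarith) (by linarith)
  have hsm3 := sub_mean (8/15) 2 F m hFc ((7 + s)/30) (1/2) (by linarith) (by linarith) (by linarith)
  have hsm4 := sub_mean (0) 2 F m hFc (1/2) ((23 - s)/30) (by linarith) (by linarith) (by linarith)
  have hsm5 := sub_mean (0) 2 F m hFc ((23 - s)/30) ((23 + s)/30) (by linarith) (by linarith) (by linarith)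
  have hsm6 := sub_mean (0) 2 F m hFc ((23 + s)/30) (1) (by linarith) (by linarith) (by linarith)
  have hd1 := kd1
  rw [← hsdef] at hd1
  rw [hd1] at hsm1
  have hd2 := kd2
  rw [← hsdef] at hd2
  rw [hd2] at hsm2
  have hd3 := kd3
  rw [← hsdef] at hd3
  rw [hd3] at hsm3
  have hd4 := kd4
  rw [← hsdef] at hd4
  rw [hd4] at hsm4
  have hd5 := kd5
  rw [← hsdef] at hd5
  rw [hd5] at hsm5
  have hd6 := kd6
  rw [← hsdef] at hd6
  rw [hd6] at hsm6
  have hsg1 := ksg1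
  rw [← hsdef] at hsg1
  have hsg2 := ksg2
  rw [← hsdef] at hsg2
  have hsg3 := ksg3
  rw [← hsdef] at hsg3
  have hsg4 := ksg4
  rw [← hsdef] at hsg4
  have hsg5 := ksg5
  rw [← hsdef] at hsg5
  have hsg6 := ksg6
  rw [← hsdef] at hsg6
  have hb1 := piece_bound (8/15) 2 (fun t => F t - m) hg M hMg (0) ((7 - s)/30)
    (by linarith) (by linarith) (by linarith) (Or.inl hsg1)
  rw [hd1, abs_of_nonneg (by nlinarith : (0:ℝ) ≤ -(7/20250) + (19/81000)*s)] at hb1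
  have hb2 := piece_bound (8/15) 2 (fun t => F t - m) hg M hMg ((7 - s)/30) ((7 + s)/30)
    (by linarith) (by linarith) (by linarith) (Or.inr hsg2)
  rw [hd2, abs_neg, abs_of_nonneg (by linarith : (0:ℝ) ≤ (19/40500)*s)] at hb2
  have hb3 := piece_bound (8/15) 2 (fun t => F t - m) hg M hMg ((7 + s)/30) (1/2)
    (by linarith) (by linarith) (by linarith) (Or.inl hsg3)
  rw [hd3, abs_of_nonneg (by nlinarith : (0:ℝ) ≤ (7/20250) + (19/81000)*s)] at hb3
  have hb4 := piece_bound (0) 2 (fun t => F t - m) hg M hMg (1/2) ((23 - s)/30)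
    (by linarith) (by linarith) (by linarith) (Or.inl hsg4)
  rw [hd4, abs_of_nonneg (by nlinarith : (0:ℝ) ≤ (7/20250) + (19/81000)*s)] at hb4
  have hb5 := piece_bound (0) 2 (fun t => F t - m) hg M hMg ((23 - s)/30) ((23 + s)/30)
    (by linarith) (by linarith) (by linarith) (Or.inr hsg5)
  rw [hd5, abs_neg, abs_of_nonneg (by linarith : (0:ℝ) ≤ (19/40500)*s)] at hb5
  have hb6 := piece_bound (0) 2 (fun t => F t - m) hg M hMg ((23 + s)/30) (1)
    (by linarith) (by linarith) (by linarith) (Or.inl hsg6)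
  rw [hd6, abs_of_nonneg (by nlinarith : (0:ℝ) ≤ -(7/20250) + (19/81000)*s)] at hb6
  beta_reduce at hb1 hb2 hb3 hb4 hb5 hb6
  have hX : (∫ x in (0:ℝ)..1, f x) -
      (7 * f 0 + 16 * f (1/2) + 7 * f 1) / 30
      + (derivWithin f (Set.Icc 0 1) 1 - derivWithin f (Set.Icc 0 1) 0) / 60
      = (∫ t in (0:ℝ)..((7 - s)/30), ker (8/15) 2 0 t * (F t - m))
        + (∫ t in ((7 - s)/30:ℝ)..((7 + s)/30), ker (8/15) 2 0 t * (F t - m))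
        + (∫ t in ((7 + s)/30:ℝ)..(1/2), ker (8/15) 2 0 t * (F t - m))
        + (∫ t in (1/2:ℝ)..((23 - s)/30), ker (0) 2 0 t * (F t - m))
        + (∫ t in ((23 - s)/30:ℝ)..((23 + s)/30), ker (0) 2 0 t * (F t - m))
        + (∫ t in ((23 + s)/30:ℝ)..(1), ker (0) 2 0 t * (F t - m)) := by
    rw [← hdw0, ← hdw1]
    linarith [hidP, hidQ, hsp1a, hsp1b, hsp2a, hsp2b, hsm1, hsm2, hsm3, hsm4, hsm5, hsm6, hB0, hB1, hBm, hsumf]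
  rw [hX]
  have htri : |(∫ t in (0:ℝ)..((7 - s)/30), ker (8/15) 2 0 t * (F t - m))
        + (∫ t in ((7 - s)/30:ℝ)..((7 + s)/30), ker (8/15) 2 0 t * (F t - m))
        + (∫ t in ((7 + s)/30:ℝ)..(1/2), ker (8/15) 2 0 t * (F t - m))
        + (∫ t in (1/2:ℝ)..((23 - s)/30), ker (0) 2 0 t * (F t - m))
        + (∫ t in ((23 - s)/30:ℝ)..((23 + s)/30), ker (0) 2 0 t * (F t - m))
        + (∫ t in ((23 + s)/30:ℝ)..(1), ker (0) 2 0 t * (F t - m))|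
      ≤ |(∫ t in (0:ℝ)..((7 - s)/30), ker (8/15) 2 0 t * (F t - m))|
        + |(∫ t in ((7 - s)/30:ℝ)..((7 + s)/30), ker (8/15) 2 0 t * (F t - m))|
        + |(∫ t in ((7 + s)/30:ℝ)..(1/2), ker (8/15) 2 0 t * (F t - m))|
        + |(∫ t in (1/2:ℝ)..((23 - s)/30), ker (0) 2 0 t * (F t - m))|
        + |(∫ t in ((23 - s)/30:ℝ)..((23 + s)/30), ker (0) 2 0 t * (F t - m))|
        + |(∫ t in ((23 + s)/30:ℝ)..(1), ker (0) 2 0 t * (F t - m))| := by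
    calc |(∫ t in (0:ℝ)..((7 - s)/30), ker (8/15) 2 0 t * (F t - m))
        + (∫ t in ((7 - s)/30:ℝ)..((7 + s)/30), ker (8/15) 2 0 t * (F t - m))
        + (∫ t in ((7 + s)/30:ℝ)..(1/2), ker (8/15) 2 0 t * (F t - m))
        + (∫ t in (1/2:ℝ)..((23 - s)/30), ker (0) 2 0 t * (F t - m))
        + (∫ t in ((23 - s)/30:ℝ)..((23 + s)/30), ker (0) 2 0 t * (F t - m))
        + (∫ t in ((23 + s)/30:ℝ)..(1), ker (0) 2 0 t * (F t - m))|
        ≤ |(∫ t in (0:ℝ)..((7 - s)/30), ker (8/15) 2 0 t * (F t - m))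
        + (∫ t in ((7 - s)/30:ℝ)..((7 + s)/30), ker (8/15) 2 0 t * (F t - m))
        + (∫ t in ((7 + s)/30:ℝ)..(1/2), ker (8/15) 2 0 t * (F t - m))
        + (∫ t in (1/2:ℝ)..((23 - s)/30), ker (0) 2 0 t * (F t - m))
        + (∫ t in ((23 - s)/30:ℝ)..((23 + s)/30), ker (0) 2 0 t * (F t - m))|
          + |(∫ t in ((23 + s)/30:ℝ)..(1), ker (0) 2 0 t * (F t - m))| := abs_add_le _ _
      _ ≤ (|(∫ t in (0:ℝ)..((7 - s)/30), ker (8/15) 2 0 t * (F t - m))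
        + (∫ t in ((7 - s)/30:ℝ)..((7 + s)/30), ker (8/15) 2 0 t * (F t - m))
        + (∫ t in ((7 + s)/30:ℝ)..(1/2), ker (8/15) 2 0 t * (F t - m))
        + (∫ t in (1/2:ℝ)..((23 - s)/30), ker (0) 2 0 t * (F t - m))|
          + |(∫ t in ((23 - s)/30:ℝ)..((23 + s)/30), ker (0) 2 0 t * (F t - m))|)
          + |(∫ t in ((23 + s)/30:ℝ)..(1), ker (0) 2 0 t * (F t - m))| := by
            gcongr
            exact abs_add_le _ _
      _ ≤ (|(∫ t in (0:ℝ)..((7 - s)/30), ker (8/15) 2 0 t * (F t - m))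
        + (∫ t in ((7 - s)/30:ℝ)..((7 + s)/30), ker (8/15) 2 0 t * (F t - m))
        + (∫ t in ((7 + s)/30:ℝ)..(1/2), ker (8/15) 2 0 t * (F t - m))|
          + |(∫ t in (1/2:ℝ)..((23 - s)/30), ker (0) 2 0 t * (F t - m))|)
          + |(∫ t in ((23 - s)/30:ℝ)..((23 + s)/30), ker (0) 2 0 t * (F t - m))|
          + |(∫ t in ((23 + s)/30:ℝ)..(1), ker (0) 2 0 t * (F t - m))| := by
            gcongr
            exact abs_add_le _ _
      _ ≤ (|(∫ t in (0:ℝ)..((7 - s)/30), ker (8/15) 2 0 t * (F t - m))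
        + (∫ t in ((7 - s)/30:ℝ)..((7 + s)/30), ker (8/15) 2 0 t * (F t - m))|
          + |(∫ t in ((7 + s)/30:ℝ)..(1/2), ker (8/15) 2 0 t * (F t - m))|)
          + |(∫ t in (1/2:ℝ)..((23 - s)/30), ker (0) 2 0 t * (F t - m))|
          + |(∫ t in ((23 - s)/30:ℝ)..((23 + s)/30), ker (0) 2 0 t * (F t - m))|
          + |(∫ t in ((23 + s)/30:ℝ)..(1), ker (0) 2 0 t * (F t - m))| := by
            gcongr
            exact abs_add_le _ _
      _ ≤ (|(∫ t in (0:ℝ)..((7 - s)/30), ker (8/15) 2 0 t * (F t - m))|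
          + |(∫ t in ((7 - s)/30:ℝ)..((7 + s)/30), ker (8/15) 2 0 t * (F t - m))|)
          + |(∫ t in ((7 + s)/30:ℝ)..(1/2), ker (8/15) 2 0 t * (F t - m))|
          + |(∫ t in (1/2:ℝ)..((23 - s)/30), ker (0) 2 0 t * (F t - m))|
          + |(∫ t in ((23 - s)/30:ℝ)..((23 + s)/30), ker (0) 2 0 t * (F t - m))|
          + |(∫ t in ((23 + s)/30:ℝ)..(1), ker (0) 2 0 t * (F t - m))| := by
            gcongr
            exact abs_add_le _ _
  refine htri.trans (le_trans (add_le_add (add_le_add (add_le_add (add_le_add (add_le_add hb1 hb2) hb3) hb4) hb5) hb6) (le_of_eq ?_))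
  rw [hMdef]
  norm_num [peanoC]
  rw [← hsdef]
  ring

set_option maxHeartbeats 4000000 in
lemma simpson_case_3 (f : ℝ → ℝ) (hf : ContDiffOn ℝ 3 f (Set.Icc 0 1)) (γ Γ : ℝ)
    (hγ : ∀ x ∈ Set.Icc (0:ℝ) 1, γ ≤ iteratedDerivWithin 3 f (Set.Icc 0 1) x)
    (hΓ : ∀ x ∈ Set.Icc (0:ℝ) 1, iteratedDerivWithin 3 f (Set.Icc 0 1) x ≤ Γ) :
    |(∫ x in (0:ℝ)..1, f x) -
        (7 * f 0 + 16 * f (1/2) + 7 * f 1) / 30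
        + (derivWithin f (Set.Icc 0 1) 1 - derivWithin f (Set.Icc 0 1) 0) / 60|
      ≤ (Γ - γ) / 2 * peanoC 3 := by
  have hfc : ContDiffOn ℝ ((3:ℕ):ℕ∞) f (Set.Icc 0 1) := by exact_mod_cast hf
  have hUD : UniqueDiffOn ℝ (Icc (0:ℝ) 1) := uniqueDiffOn_Icc one_pos
  set F : ℝ → ℝ := iteratedDerivWithin 3 f (Icc 0 1) with hFdef
  set m : ℝ := (γ + Γ)/2 with hmdef
  set M : ℝ := (Γ - γ)/2 with hMdef
  have hFc : ContinuousOn F (Icc 0 1) :=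
    hfc.continuousOn_iteratedDerivWithin (by exact_mod_cast le_rfl) hUD
  have hg : ContinuousOn (fun t => F t - m) (Icc 0 1) := hFc.sub continuousOn_const
  have hMg : ∀ t ∈ Icc (0:ℝ) 1, |F t - m| ≤ M := by
    intro t ht
    rw [abs_le]
    constructor
    · have := hγ t ht; rw [hmdef, hMdef]; simp only [hFdef]; linarith
    · have := hΓ t ht; rw [hmdef, hMdef]; simp only [hFdef]; linarith
  have hidP := ibp 3 f (by omega) hfc (8/15) 0 (1/2) (by norm_num) (by norm_num) (by norm_num)
  have hidQ := ibp 3 f (by omega) hfc 0 (1/2) 1 (by norm_num) (by norm_num) (by norm_num)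
  have hfint : ∀ a b : ℝ, 0 ≤ a → a ≤ b → b ≤ 1 → IntervalIntegrable f volume a b := by
    intro a b h0 hab hb
    apply ContinuousOn.intervalIntegrable
    rw [uIcc_of_le hab]
    exact hfc.continuousOn.mono (Icc_subset_Icc h0 hb)
  have hFkint : ∀ (w : ℝ) (a b : ℝ), 0 ≤ a → a ≤ b → b ≤ 1 →
      IntervalIntegrable (fun t => ker w 3 0 t * F t) volume a b := by
    intro w a b h0 hab hb
    apply ContinuousOn.intervalIntegrable
    rw [uIcc_of_le hab]
    exact (ker_continuous w 3 0).continuousOn.mul (hFc.mono (Icc_subset_Icc h0 hb))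
  have hsumf : (∫ t in (0:ℝ)..(1/2), f t) + (∫ t in (1/2:ℝ)..1, f t) = ∫ t in (0:ℝ)..1, f t :=
    intervalIntegral.integral_add_adjacent_intervals
      (hfint 0 (1/2) (by norm_num) (by norm_num) (by norm_num))
      (hfint (1/2) 1 (by norm_num) (by norm_num) (by norm_num))
  have hdw1 : iteratedDerivWithin 1 f (Icc 0 1) 1 = derivWithin f (Icc 0 1) 1 :=
    congrFun iteratedDerivWithin_one 1
  have hdw0 : iteratedDerivWithin 1 f (Icc 0 1) 0 = derivWithin f (Icc 0 1) 0 :=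
    congrFun iteratedDerivWithin_one 0
  simp only [Nat.cast_ofNat] at hidP hidQ
  have hB0 : bnd 3 f (8/15) 0
      = (7/30) * f 0 + (1/60) * iteratedDerivWithin 1 f (Icc 0 1) 0 := by
    simp only [bnd, Finset.sum_range_succ, Finset.sum_range_zero]
    norm_num [ker, eb, Nat.factorial, tn1, tn2, tn3, tn4, tn5, tn6]
    ring
  have hB1 : bnd 3 f 0 1
      = -((7/30) * f 1) + (1/60) * iteratedDerivWithin 1 f (Icc 0 1) 1 := by
    simp only [bnd, Finset.sum_range_succ, Finset.sum_range_zero]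
    norm_num [ker, eb, Nat.factorial, tn1, tn2, tn3, tn4, tn5, tn6]
    ring
  have hBm : bnd 3 f (8/15) (1/2) - bnd 3 f 0 (1/2)
      = -((16/30) * f (1/2)) := by
    simp only [bnd, Finset.sum_range_succ, Finset.sum_range_zero]
    norm_num [ker, eb, Nat.factorial, tn1, tn2, tn3, tn4, tn5, tn6]
    ring
  simp only [← hFdef] at hidP hidQ
  have hsp1 : (∫ t in (0:ℝ)..(1/5), ker (8/15) 3 0 t * F t)
      + (∫ t in (1/5:ℝ)..(1/2), ker (8/15) 3 0 t * F t)
      = ∫ t in (0:ℝ)..(1/2), ker (8/15) 3 0 t * F t :=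
    intervalIntegral.integral_add_adjacent_intervals
      (hFkint _ _ _ (by norm_num) (by norm_num) (by norm_num))
      (hFkint _ _ _ (by norm_num) (by norm_num) (by norm_num))
  have hsp2 : (∫ t in (1/2:ℝ)..(4/5), ker 0 3 0 t * F t)
      + (∫ t in (4/5:ℝ)..1, ker 0 3 0 t * F t)
      = ∫ t in (1/2:ℝ)..1, ker 0 3 0 t * F t :=
    intervalIntegral.integral_add_adjacent_intervals
      (hFkint _ _ _ (by norm_num) (by norm_num) (by norm_num))
      (hFkint _ _ _ (by norm_num) (by norm_num) (by norm_num))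
  have hsm1 := sub_mean (8/15) 3 F m hFc (0) (1/5) (by norm_num) (by norm_num) (by norm_num)
  have hsm2 := sub_mean (8/15) 3 F m hFc (1/5) (1/2) (by norm_num) (by norm_num) (by norm_num)
  have hsm3 := sub_mean (0) 3 F m hFc (1/2) (4/5) (by norm_num) (by norm_num) (by norm_num)
  have hsm4 := sub_mean (0) 3 F m hFc (4/5) (1) (by norm_num) (by norm_num) (by norm_num)
  have hd1 : ker (8/15) 3 (-1) (1/5) - ker (8/15) 3 (-1) (0) = -(1/11250) := by
    norm_num [ker, eb, Nat.factorial, tn1, tn2, tn3, tn4, tn5, tn6]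
  rw [hd1] at hsm1
  have hd2 : ker (8/15) 3 (-1) (1/2) - ker (8/15) 3 (-1) (1/5) = (21/80000) := by
    norm_num [ker, eb, Nat.factorial, tn1, tn2, tn3, tn4, tn5, tn6]
  rw [hd2] at hsm2
  have hd3 : ker (0) 3 (-1) (4/5) - ker (0) 3 (-1) (1/2) = -(21/80000) := by
    norm_num [ker, eb, Nat.factorial, tn1, tn2, tn3, tn4, tn5, tn6]
  rw [hd3] at hsm3
  have hd4 : ker (0) 3 (-1) (1) - ker (0) 3 (-1) (4/5) = (1/11250) := by
    norm_num [ker, eb, Nat.factorial, tn1, tn2, tn3, tn4, tn5, tn6]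
  rw [hd4] at hsm4
  have hsg1 : ∀ t ∈ Icc (0:ℝ) (1/5), ker (8/15) 3 0 t ≤ 0 := by
    intro t ht
    obtain ⟨ht1, ht2⟩ := ht
    have hfac : ker (8/15) 3 0 t = -(t*(5*t-1)*(2*t-1))/60 := by
      norm_num [ker, eb, Nat.factorial, tn1, tn2, tn3, tn4, tn5, tn6]; ring
    rw [hfac]
    nlinarith [mul_nonneg (mul_nonneg ht1 (by linarith : (0:ℝ) ≤ 1 - 5*t)) (by linarith : (0:ℝ) ≤ 1 - 2*t)]
  have hsg2 : ∀ t ∈ Icc (1/5:ℝ) (1/2), 0 ≤ ker (8/15) 3 0 t := by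
    intro t ht
    obtain ⟨ht1, ht2⟩ := ht
    have hfac : ker (8/15) 3 0 t = -(t*(5*t-1)*(2*t-1))/60 := by
      norm_num [ker, eb, Nat.factorial, tn1, tn2, tn3, tn4, tn5, tn6]; ring
    rw [hfac]
    nlinarith [mul_nonneg (mul_nonneg (by linarith : (0:ℝ) ≤ t) (by linarith : (0:ℝ) ≤ 5*t - 1)) (by linarith : (0:ℝ) ≤ 1 - 2*t)]
  have hsg3 : ∀ t ∈ Icc (1/2:ℝ) (4/5), ker (0) 3 0 t ≤ 0 := by
    intro t ht
    obtain ⟨ht1, ht2⟩ := ht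
    have hfac : ker (0) 3 0 t = ((1-t)*(4-5*t)*(1-2*t))/60 := by
      norm_num [ker, eb, Nat.factorial, tn1, tn2, tn3, tn4, tn5, tn6]; ring
    rw [hfac]
    nlinarith [mul_nonneg (mul_nonneg (by linarith : (0:ℝ) ≤ 1 - t) (by linarith : (0:ℝ) ≤ 4 - 5*t)) (by linarith : (0:ℝ) ≤ 2*t - 1)]
  have hsg4 : ∀ t ∈ Icc (4/5:ℝ) (1), 0 ≤ ker (0) 3 0 t := by
    intro t ht
    obtain ⟨ht1, ht2⟩ := ht
    have hfac : ker (0) 3 0 t = ((1-t)*(4-5*t)*(1-2*t))/60 := by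
      norm_num [ker, eb, Nat.factorial, tn1, tn2, tn3, tn4, tn5, tn6]; ring
    rw [hfac]
    nlinarith [mul_nonneg (mul_nonneg (by linarith : (0:ℝ) ≤ 1 - t) (by linarith : (0:ℝ) ≤ 5*t - 4)) (by linarith : (0:ℝ) ≤ 2*t - 1)]
  have hb1 := piece_bound (8/15) 3 (fun t => F t - m) hg M hMg (0) (1/5)
    (by norm_num) (by norm_num) (by norm_num) (Or.inr hsg1)
  rw [hd1, abs_neg, abs_of_nonneg (by norm_num : (0:ℝ) ≤ 1/11250)] at hb1
  have hb2 := piece_bound (8/15) 3 (fun t => F t - m) hg M hMg (1/5) (1/2)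
    (by norm_num) (by norm_num) (by norm_num) (Or.inl hsg2)
  rw [hd2, abs_of_nonneg (by norm_num : (0:ℝ) ≤ (21/80000))] at hb2
  have hb3 := piece_bound (0) 3 (fun t => F t - m) hg M hMg (1/2) (4/5)
    (by norm_num) (by norm_num) (by norm_num) (Or.inr hsg3)
  rw [hd3, abs_neg, abs_of_nonneg (by norm_num : (0:ℝ) ≤ 21/80000)] at hb3
  have hb4 := piece_bound (0) 3 (fun t => F t - m) hg M hMg (4/5) (1)
    (by norm_num) (by norm_num) (by norm_num) (Or.inl hsg4)
  rw [hd4, abs_of_nonneg (by norm_num : (0:ℝ) ≤ (1/11250))] at hb4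
  beta_reduce at hb1 hb2 hb3 hb4
  have hX : (∫ x in (0:ℝ)..1, f x) -
      (7 * f 0 + 16 * f (1/2) + 7 * f 1) / 30
      + (derivWithin f (Set.Icc 0 1) 1 - derivWithin f (Set.Icc 0 1) 0) / 60
      = (∫ t in (0:ℝ)..(1/5), ker (8/15) 3 0 t * (F t - m))
        + (∫ t in (1/5:ℝ)..(1/2), ker (8/15) 3 0 t * (F t - m))
        + (∫ t in (1/2:ℝ)..(4/5), ker (0) 3 0 t * (F t - m))
        + (∫ t in (4/5:ℝ)..(1), ker (0) 3 0 t * (F t - m)) := by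
    rw [← hdw0, ← hdw1]
    linarith [hidP, hidQ, hsp1, hsp2, hsm1, hsm2, hsm3, hsm4, hB0, hB1, hBm, hsumf]
  rw [hX]
  have htri : |(∫ t in (0:ℝ)..(1/5), ker (8/15) 3 0 t * (F t - m))
        + (∫ t in (1/5:ℝ)..(1/2), ker (8/15) 3 0 t * (F t - m))
        + (∫ t in (1/2:ℝ)..(4/5), ker (0) 3 0 t * (F t - m))
        + (∫ t in (4/5:ℝ)..(1), ker (0) 3 0 t * (F t - m))|
      ≤ |(∫ t in (0:ℝ)..(1/5), ker (8/15) 3 0 t * (F t - m))|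
        + |(∫ t in (1/5:ℝ)..(1/2), ker (8/15) 3 0 t * (F t - m))|
        + |(∫ t in (1/2:ℝ)..(4/5), ker (0) 3 0 t * (F t - m))|
        + |(∫ t in (4/5:ℝ)..(1), ker (0) 3 0 t * (F t - m))| := by
    calc |(∫ t in (0:ℝ)..(1/5), ker (8/15) 3 0 t * (F t - m))
        + (∫ t in (1/5:ℝ)..(1/2), ker (8/15) 3 0 t * (F t - m))
        + (∫ t in (1/2:ℝ)..(4/5), ker (0) 3 0 t * (F t - m))
        + (∫ t in (4/5:ℝ)..(1), ker (0) 3 0 t * (F t - m))|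
        ≤ |(∫ t in (0:ℝ)..(1/5), ker (8/15) 3 0 t * (F t - m))
        + (∫ t in (1/5:ℝ)..(1/2), ker (8/15) 3 0 t * (F t - m))
        + (∫ t in (1/2:ℝ)..(4/5), ker (0) 3 0 t * (F t - m))|
          + |(∫ t in (4/5:ℝ)..(1), ker (0) 3 0 t * (F t - m))| := abs_add_le _ _
      _ ≤ (|(∫ t in (0:ℝ)..(1/5), ker (8/15) 3 0 t * (F t - m))
        + (∫ t in (1/5:ℝ)..(1/2), ker (8/15) 3 0 t * (F t - m))|
          + |(∫ t in (1/2:ℝ)..(4/5), ker (0) 3 0 t * (F t - m))|)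
          + |(∫ t in (4/5:ℝ)..(1), ker (0) 3 0 t * (F t - m))| := by
              gcongr
              exact abs_add_le _ _
      _ ≤ ((|(∫ t in (0:ℝ)..(1/5), ker (8/15) 3 0 t * (F t - m))|
        + |(∫ t in (1/5:ℝ)..(1/2), ker (8/15) 3 0 t * (F t - m))|)
          + |(∫ t in (1/2:ℝ)..(4/5), ker (0) 3 0 t * (F t - m))|)
          + |(∫ t in (4/5:ℝ)..(1), ker (0) 3 0 t * (F t - m))| := by
              gcongr
              exact abs_add_le _ _
  refine htri.trans (le_trans (add_le_add (add_le_add (add_le_add hb1 hb2) hb3) hb4) (le_of_eq ?_))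
  rw [hMdef]
  norm_num [peanoC]
  try ring

set_option maxHeartbeats 4000000 in
lemma simpson_case_4 (f : ℝ → ℝ) (hf : ContDiffOn ℝ 4 f (Set.Icc 0 1)) (γ Γ : ℝ)
    (hγ : ∀ x ∈ Set.Icc (0:ℝ) 1, γ ≤ iteratedDerivWithin 4 f (Set.Icc 0 1) x)
    (hΓ : ∀ x ∈ Set.Icc (0:ℝ) 1, iteratedDerivWithin 4 f (Set.Icc 0 1) x ≤ Γ) :
    |(∫ x in (0:ℝ)..1, f x) -
        (7 * f 0 + 16 * f (1/2) + 7 * f 1) / 30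
        + (derivWithin f (Set.Icc 0 1) 1 - derivWithin f (Set.Icc 0 1) 0) / 60|
      ≤ (Γ - γ) / 2 * peanoC 4 := by
  have hfc : ContDiffOn ℝ ((4:ℕ):ℕ∞) f (Set.Icc 0 1) := by exact_mod_cast hf
  have hUD : UniqueDiffOn ℝ (Icc (0:ℝ) 1) := uniqueDiffOn_Icc one_pos
  set F : ℝ → ℝ := iteratedDerivWithin 4 f (Icc 0 1) with hFdef
  set m : ℝ := (γ + Γ)/2 with hmdef
  set M : ℝ := (Γ - γ)/2 with hMdef
  have hFc : ContinuousOn F (Icc 0 1) :=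
    hfc.continuousOn_iteratedDerivWithin (by exact_mod_cast le_rfl) hUD
  have hg : ContinuousOn (fun t => F t - m) (Icc 0 1) := hFc.sub continuousOn_const
  have hMg : ∀ t ∈ Icc (0:ℝ) 1, |F t - m| ≤ M := by
    intro t ht
    rw [abs_le]
    constructor
    · have := hγ t ht; rw [hmdef, hMdef]; simp only [hFdef]; linarith
    · have := hΓ t ht; rw [hmdef, hMdef]; simp only [hFdef]; linarith
  have hidP := ibp 4 f (by omega) hfc (8/15) 0 (1/2) (by norm_num) (by norm_num) (by norm_num)
  have hidQ := ibp 4 f (by omega) hfc 0 (1/2) 1 (by norm_num) (by norm_num) (by norm_num)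
  have hfint : ∀ a b : ℝ, 0 ≤ a → a ≤ b → b ≤ 1 → IntervalIntegrable f volume a b := by
    intro a b h0 hab hb
    apply ContinuousOn.intervalIntegrable
    rw [uIcc_of_le hab]
    exact hfc.continuousOn.mono (Icc_subset_Icc h0 hb)
  have hFkint : ∀ (w : ℝ) (a b : ℝ), 0 ≤ a → a ≤ b → b ≤ 1 →
      IntervalIntegrable (fun t => ker w 4 0 t * F t) volume a b := by
    intro w a b h0 hab hb
    apply ContinuousOn.intervalIntegrable
    rw [uIcc_of_le hab]
    exact (ker_continuous w 4 0).continuousOn.mul (hFc.mono (Icc_subset_Icc h0 hb))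
  have hsumf : (∫ t in (0:ℝ)..(1/2), f t) + (∫ t in (1/2:ℝ)..1, f t) = ∫ t in (0:ℝ)..1, f t :=
    intervalIntegral.integral_add_adjacent_intervals
      (hfint 0 (1/2) (by norm_num) (by norm_num) (by norm_num))
      (hfint (1/2) 1 (by norm_num) (by norm_num) (by norm_num))
  have hdw1 : iteratedDerivWithin 1 f (Icc 0 1) 1 = derivWithin f (Icc 0 1) 1 :=
    congrFun iteratedDerivWithin_one 1
  have hdw0 : iteratedDerivWithin 1 f (Icc 0 1) 0 = derivWithin f (Icc 0 1) 0 :=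
    congrFun iteratedDerivWithin_one 0
  simp only [Nat.cast_ofNat] at hidP hidQ
  have hB0 : bnd 4 f (8/15) 0
      = (7/30) * f 0 + (1/60) * iteratedDerivWithin 1 f (Icc 0 1) 0 := by
    simp only [bnd, Finset.sum_range_succ, Finset.sum_range_zero]
    norm_num [ker, eb, Nat.factorial, tn1, tn2, tn3, tn4, tn5, tn6]
    ring
  have hB1 : bnd 4 f 0 1
      = -((7/30) * f 1) + (1/60) * iteratedDerivWithin 1 f (Icc 0 1) 1 := by
    simp only [bnd, Finset.sum_range_succ, Finset.sum_range_zero]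
    norm_num [ker, eb, Nat.factorial, tn1, tn2, tn3, tn4, tn5, tn6]
    ring
  have hBm : bnd 4 f (8/15) (1/2) - bnd 4 f 0 (1/2)
      = -((16/30) * f (1/2)) := by
    simp only [bnd, Finset.sum_range_succ, Finset.sum_range_zero]
    norm_num [ker, eb, Nat.factorial, tn1, tn2, tn3, tn4, tn5, tn6]
    ring
  simp only [← hFdef] at hidP hidQ
  have hsp1 : (∫ t in (0:ℝ)..(1/3), ker (8/15) 4 0 t * F t)
      + (∫ t in (1/3:ℝ)..(1/2), ker (8/15) 4 0 t * F t)
      = ∫ t in (0:ℝ)..(1/2), ker (8/15) 4 0 t * F t :=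
    intervalIntegral.integral_add_adjacent_intervals
      (hFkint _ _ _ (by norm_num) (by norm_num) (by norm_num))
      (hFkint _ _ _ (by norm_num) (by norm_num) (by norm_num))
  have hsp2 : (∫ t in (1/2:ℝ)..(2/3), ker 0 4 0 t * F t)
      + (∫ t in (2/3:ℝ)..1, ker 0 4 0 t * F t)
      = ∫ t in (1/2:ℝ)..1, ker 0 4 0 t * F t :=
    intervalIntegral.integral_add_adjacent_intervals
      (hFkint _ _ _ (by norm_num) (by norm_num) (by norm_num))
      (hFkint _ _ _ (by norm_num) (by norm_num) (by norm_num))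
  have hsm1 := sub_mean (8/15) 4 F m hFc (0) (1/3) (by norm_num) (by norm_num) (by norm_num)
  have hsm2 := sub_mean (8/15) 4 F m hFc (1/3) (1/2) (by norm_num) (by norm_num) (by norm_num)
  have hsm3 := sub_mean (0) 4 F m hFc (1/2) (2/3) (by norm_num) (by norm_num) (by norm_num)
  have hsm4 := sub_mean (0) 4 F m hFc (2/3) (1) (by norm_num) (by norm_num) (by norm_num)
  have hd1 : ker (8/15) 4 (-1) (1/3) - ker (8/15) 4 (-1) (0) = (1/58320) := by
    norm_num [ker, eb, Nat.factorial, tn1, tn2, tn3, tn4, tn5, tn6]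
  rw [hd1] at hsm1
  have hd2 : ker (8/15) 4 (-1) (1/2) - ker (8/15) 4 (-1) (1/3) = -(1/58320) := by
    norm_num [ker, eb, Nat.factorial, tn1, tn2, tn3, tn4, tn5, tn6]
  rw [hd2] at hsm2
  have hd3 : ker (0) 4 (-1) (2/3) - ker (0) 4 (-1) (1/2) = -(1/58320) := by
    norm_num [ker, eb, Nat.factorial, tn1, tn2, tn3, tn4, tn5, tn6]
  rw [hd3] at hsm3
  have hd4 : ker (0) 4 (-1) (1) - ker (0) 4 (-1) (2/3) = (1/58320) := by
    norm_num [ker, eb, Nat.factorial, tn1, tn2, tn3, tn4, tn5, tn6]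
  rw [hd4] at hsm4
  have hsg1 : ∀ t ∈ Icc (0:ℝ) (1/3), 0 ≤ ker (8/15) 4 0 t := by
    intro t ht
    obtain ⟨ht1, ht2⟩ := ht
    have hfac : ker (8/15) 4 0 t = (t^2*(3*t-1)*(5*t-3))/360 := by
      norm_num [ker, eb, Nat.factorial, tn1, tn2, tn3, tn4, tn5, tn6]; ring
    rw [hfac]
    nlinarith [mul_nonneg (mul_nonneg (sq_nonneg t) (by linarith : (0:ℝ) ≤ 1 - 3*t)) (by linarith : (0:ℝ) ≤ 3 - 5*t)]
  have hsg2 : ∀ t ∈ Icc (1/3:ℝ) (1/2), ker (8/15) 4 0 t ≤ 0 := by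
    intro t ht
    obtain ⟨ht1, ht2⟩ := ht
    have hfac : ker (8/15) 4 0 t = (t^2*(3*t-1)*(5*t-3))/360 := by
      norm_num [ker, eb, Nat.factorial, tn1, tn2, tn3, tn4, tn5, tn6]; ring
    rw [hfac]
    nlinarith [mul_nonneg (mul_nonneg (sq_nonneg t) (by linarith : (0:ℝ) ≤ 3*t - 1)) (by linarith : (0:ℝ) ≤ 3 - 5*t)]
  have hsg3 : ∀ t ∈ Icc (1/2:ℝ) (2/3), ker (0) 4 0 t ≤ 0 := by
    intro t ht
    obtain ⟨ht1, ht2⟩ := ht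
    have hfac : ker (0) 4 0 t = ((1-t)^2*(2-3*t)*(2-5*t))/360 := by
      norm_num [ker, eb, Nat.factorial, tn1, tn2, tn3, tn4, tn5, tn6]; ring
    rw [hfac]
    nlinarith [mul_nonneg (mul_nonneg (sq_nonneg (1-t)) (by linarith : (0:ℝ) ≤ 2 - 3*t)) (by linarith : (0:ℝ) ≤ 5*t - 2)]
  have hsg4 : ∀ t ∈ Icc (2/3:ℝ) (1), 0 ≤ ker (0) 4 0 t := by
    intro t ht
    obtain ⟨ht1, ht2⟩ := ht
    have hfac : ker (0) 4 0 t = ((1-t)^2*(2-3*t)*(2-5*t))/360 := by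
      norm_num [ker, eb, Nat.factorial, tn1, tn2, tn3, tn4, tn5, tn6]; ring
    rw [hfac]
    nlinarith [mul_nonneg (mul_nonneg (sq_nonneg (1-t)) (by linarith : (0:ℝ) ≤ 3*t - 2)) (by linarith : (0:ℝ) ≤ 5*t - 2)]
  have hb1 := piece_bound (8/15) 4 (fun t => F t - m) hg M hMg (0) (1/3)
    (by norm_num) (by norm_num) (by norm_num) (Or.inl hsg1)
  rw [hd1, abs_of_nonneg (by norm_num : (0:ℝ) ≤ (1/58320))] at hb1
  have hb2 := piece_bound (8/15) 4 (fun t => F t - m) hg M hMg (1/3) (1/2)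
    (by norm_num) (by norm_num) (by norm_num) (Or.inr hsg2)
  rw [hd2, abs_neg, abs_of_nonneg (by norm_num : (0:ℝ) ≤ 1/58320)] at hb2
  have hb3 := piece_bound (0) 4 (fun t => F t - m) hg M hMg (1/2) (2/3)
    (by norm_num) (by norm_num) (by norm_num) (Or.inr hsg3)
  rw [hd3, abs_neg, abs_of_nonneg (by norm_num : (0:ℝ) ≤ 1/58320)] at hb3
  have hb4 := piece_bound (0) 4 (fun t => F t - m) hg M hMg (2/3) (1)
    (by norm_num) (by norm_num) (by norm_num) (Or.inl hsg4)
  rw [hd4, abs_of_nonneg (by norm_num : (0:ℝ) ≤ (1/58320))] at hb4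
  beta_reduce at hb1 hb2 hb3 hb4
  have hX : (∫ x in (0:ℝ)..1, f x) -
      (7 * f 0 + 16 * f (1/2) + 7 * f 1) / 30
      + (derivWithin f (Set.Icc 0 1) 1 - derivWithin f (Set.Icc 0 1) 0) / 60
      = (∫ t in (0:ℝ)..(1/3), ker (8/15) 4 0 t * (F t - m))
        + (∫ t in (1/3:ℝ)..(1/2), ker (8/15) 4 0 t * (F t - m))
        + (∫ t in (1/2:ℝ)..(2/3), ker (0) 4 0 t * (F t - m))
        + (∫ t in (2/3:ℝ)..(1), ker (0) 4 0 t * (F t - m)) := by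
    rw [← hdw0, ← hdw1]
    linarith [hidP, hidQ, hsp1, hsp2, hsm1, hsm2, hsm3, hsm4, hB0, hB1, hBm, hsumf]
  rw [hX]
  have htri : |(∫ t in (0:ℝ)..(1/3), ker (8/15) 4 0 t * (F t - m))
        + (∫ t in (1/3:ℝ)..(1/2), ker (8/15) 4 0 t * (F t - m))
        + (∫ t in (1/2:ℝ)..(2/3), ker (0) 4 0 t * (F t - m))
        + (∫ t in (2/3:ℝ)..(1), ker (0) 4 0 t * (F t - m))|
      ≤ |(∫ t in (0:ℝ)..(1/3), ker (8/15) 4 0 t * (F t - m))|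
        + |(∫ t in (1/3:ℝ)..(1/2), ker (8/15) 4 0 t * (F t - m))|
        + |(∫ t in (1/2:ℝ)..(2/3), ker (0) 4 0 t * (F t - m))|
        + |(∫ t in (2/3:ℝ)..(1), ker (0) 4 0 t * (F t - m))| := by
    calc |(∫ t in (0:ℝ)..(1/3), ker (8/15) 4 0 t * (F t - m))
        + (∫ t in (1/3:ℝ)..(1/2), ker (8/15) 4 0 t * (F t - m))
        + (∫ t in (1/2:ℝ)..(2/3), ker (0) 4 0 t * (F t - m))
        + (∫ t in (2/3:ℝ)..(1), ker (0) 4 0 t * (F t - m))|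
        ≤ |(∫ t in (0:ℝ)..(1/3), ker (8/15) 4 0 t * (F t - m))
        + (∫ t in (1/3:ℝ)..(1/2), ker (8/15) 4 0 t * (F t - m))
        + (∫ t in (1/2:ℝ)..(2/3), ker (0) 4 0 t * (F t - m))|
          + |(∫ t in (2/3:ℝ)..(1), ker (0) 4 0 t * (F t - m))| := abs_add_le _ _
      _ ≤ (|(∫ t in (0:ℝ)..(1/3), ker (8/15) 4 0 t * (F t - m))
        + (∫ t in (1/3:ℝ)..(1/2), ker (8/15) 4 0 t * (F t - m))|
          + |(∫ t in (1/2:ℝ)..(2/3), ker (0) 4 0 t * (F t - m))|)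
          + |(∫ t in (2/3:ℝ)..(1), ker (0) 4 0 t * (F t - m))| := by
              gcongr
              exact abs_add_le _ _
      _ ≤ ((|(∫ t in (0:ℝ)..(1/3), ker (8/15) 4 0 t * (F t - m))|
        + |(∫ t in (1/3:ℝ)..(1/2), ker (8/15) 4 0 t * (F t - m))|)
          + |(∫ t in (1/2:ℝ)..(2/3), ker (0) 4 0 t * (F t - m))|)
          + |(∫ t in (2/3:ℝ)..(1), ker (0) 4 0 t * (F t - m))| := by
              gcongr
              exact abs_add_le _ _
  refine htri.trans (le_trans (add_le_add (add_le_add (add_le_add hb1 hb2) hb3) hb4) (le_of_eq ?_))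
  rw [hMdef]
  norm_num [peanoC]
  try ring

set_option maxHeartbeats 4000000 in
lemma simpson_case_5 (f : ℝ → ℝ) (hf : ContDiffOn ℝ 5 f (Set.Icc 0 1)) (γ Γ : ℝ)
    (hγ : ∀ x ∈ Set.Icc (0:ℝ) 1, γ ≤ iteratedDerivWithin 5 f (Set.Icc 0 1) x)
    (hΓ : ∀ x ∈ Set.Icc (0:ℝ) 1, iteratedDerivWithin 5 f (Set.Icc 0 1) x ≤ Γ) :
    |(∫ x in (0:ℝ)..1, f x) -
        (7 * f 0 + 16 * f (1/2) + 7 * f 1) / 30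
        + (derivWithin f (Set.Icc 0 1) 1 - derivWithin f (Set.Icc 0 1) 0) / 60|
      ≤ (Γ - γ) / 2 * peanoC 5 := by
  have hfc : ContDiffOn ℝ ((5:ℕ):ℕ∞) f (Set.Icc 0 1) := by exact_mod_cast hf
  have hUD : UniqueDiffOn ℝ (Icc (0:ℝ) 1) := uniqueDiffOn_Icc one_pos
  set F : ℝ → ℝ := iteratedDerivWithin 5 f (Icc 0 1) with hFdef
  set m : ℝ := (γ + Γ)/2 with hmdef
  set M : ℝ := (Γ - γ)/2 with hMdef
  have hFc : ContinuousOn F (Icc 0 1) :=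
    hfc.continuousOn_iteratedDerivWithin (by exact_mod_cast le_rfl) hUD
  have hg : ContinuousOn (fun t => F t - m) (Icc 0 1) := hFc.sub continuousOn_const
  have hMg : ∀ t ∈ Icc (0:ℝ) 1, |F t - m| ≤ M := by
    intro t ht
    rw [abs_le]
    constructor
    · have := hγ t ht; rw [hmdef, hMdef]; simp only [hFdef]; linarith
    · have := hΓ t ht; rw [hmdef, hMdef]; simp only [hFdef]; linarith
  have hidP := ibp 5 f (by omega) hfc (8/15) 0 (1/2) (by norm_num) (by norm_num) (by norm_num)
  have hidQ := ibp 5 f (by omega) hfc 0 (1/2) 1 (by norm_num) (by norm_num) (by norm_num)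
  have hfint : ∀ a b : ℝ, 0 ≤ a → a ≤ b → b ≤ 1 → IntervalIntegrable f volume a b := by
    intro a b h0 hab hb
    apply ContinuousOn.intervalIntegrable
    rw [uIcc_of_le hab]
    exact hfc.continuousOn.mono (Icc_subset_Icc h0 hb)
  have hFkint : ∀ (w : ℝ) (a b : ℝ), 0 ≤ a → a ≤ b → b ≤ 1 →
      IntervalIntegrable (fun t => ker w 5 0 t * F t) volume a b := by
    intro w a b h0 hab hb
    apply ContinuousOn.intervalIntegrable
    rw [uIcc_of_le hab]
    exact (ker_continuous w 5 0).continuousOn.mul (hFc.mono (Icc_subset_Icc h0 hb))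
  have hsumf : (∫ t in (0:ℝ)..(1/2), f t) + (∫ t in (1/2:ℝ)..1, f t) = ∫ t in (0:ℝ)..1, f t :=
    intervalIntegral.integral_add_adjacent_intervals
      (hfint 0 (1/2) (by norm_num) (by norm_num) (by norm_num))
      (hfint (1/2) 1 (by norm_num) (by norm_num) (by norm_num))
  have hdw1 : iteratedDerivWithin 1 f (Icc 0 1) 1 = derivWithin f (Icc 0 1) 1 :=
    congrFun iteratedDerivWithin_one 1
  have hdw0 : iteratedDerivWithin 1 f (Icc 0 1) 0 = derivWithin f (Icc 0 1) 0 :=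
    congrFun iteratedDerivWithin_one 0
  simp only [Nat.cast_ofNat] at hidP hidQ
  have hB0 : bnd 5 f (8/15) 0
      = (7/30) * f 0 + (1/60) * iteratedDerivWithin 1 f (Icc 0 1) 0 := by
    simp only [bnd, Finset.sum_range_succ, Finset.sum_range_zero]
    norm_num [ker, eb, Nat.factorial, tn1, tn2, tn3, tn4, tn5, tn6]
    ring
  have hB1 : bnd 5 f 0 1
      = -((7/30) * f 1) + (1/60) * iteratedDerivWithin 1 f (Icc 0 1) 1 := by
    simp only [bnd, Finset.sum_range_succ, Finset.sum_range_zero]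
    norm_num [ker, eb, Nat.factorial, tn1, tn2, tn3, tn4, tn5, tn6]
    ring
  have hBm : bnd 5 f (8/15) (1/2) - bnd 5 f 0 (1/2) = -((16/30) * f (1/2)) := by
    simp only [bnd, Finset.sum_range_succ, Finset.sum_range_zero]
    norm_num [ker, eb, Nat.factorial, tn1, tn2, tn3, tn4, tn5, tn6]
    ring
  simp only [← hFdef] at hidP hidQ
  have hsm1 := sub_mean (8/15) 5 F m hFc 0 (1/2) (by norm_num) (by norm_num) (by norm_num)
  have hsm2 := sub_mean 0 5 F m hFc (1/2) 1 (by norm_num) (by norm_num) (by norm_num)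
  have hd1 : ker (8/15) 5 (-1) (1/2) - ker (8/15) 5 (-1) 0 = -(1/230400) := by
    norm_num [ker, eb, Nat.factorial, tn1, tn2, tn3, tn4, tn5, tn6]
  have hd2 : ker 0 5 (-1) 1 - ker 0 5 (-1) (1/2) = 1/230400 := by
    norm_num [ker, eb, Nat.factorial, tn1, tn2, tn3, tn4, tn5, tn6]
  rw [hd1] at hsm1
  rw [hd2] at hsm2
  have hs1 : ∀ t ∈ Icc (0:ℝ) (1/2), ker (8/15) 5 0 t ≤ 0 := by
    intro t ht
    obtain ⟨h1, h2⟩ := ht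
    have hfac : ker (8/15) 5 0 t = -(t^3*(3*t-2)*(2*t-1))/720 := by
      norm_num [ker, eb, Nat.factorial, tn1, tn2, tn3, tn4, tn5, tn6]; ring
    rw [hfac]
    nlinarith [mul_nonneg (mul_nonneg (pow_nonneg h1 3)
      (by linarith : (0:ℝ) ≤ 2 - 3*t)) (by linarith : (0:ℝ) ≤ 1 - 2*t)]
  have hs2 : ∀ t ∈ Icc (1/2:ℝ) 1, 0 ≤ ker 0 5 0 t := by
    intro t ht
    obtain ⟨h1, h2⟩ := ht
    have hfac : ker 0 5 0 t = ((1-t)^3*(1-3*t)*(1-2*t))/720 := by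
      norm_num [ker, eb, Nat.factorial, tn1, tn2, tn3, tn4, tn5, tn6]; ring
    rw [hfac]
    nlinarith [mul_nonneg (mul_nonneg (pow_nonneg (by linarith : (0:ℝ) ≤ 1 - t) 3)
      (by linarith : (0:ℝ) ≤ 3*t - 1)) (by linarith : (0:ℝ) ≤ 2*t - 1)]
  have hb1 := piece_bound (8/15) 5 (fun t => F t - m) hg M hMg 0 (1/2)
    (by norm_num) (by norm_num) (by norm_num) (Or.inr hs1)
  have hb2 := piece_bound 0 5 (fun t => F t - m) hg M hMg (1/2) 1
    (by norm_num) (by norm_num) (by norm_num) (Or.inl hs2)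
  rw [hd1] at hb1
  rw [hd2] at hb2
  beta_reduce at hb1 hb2
  have hX : (∫ x in (0:ℝ)..1, f x) -
      (7 * f 0 + 16 * f (1/2) + 7 * f 1) / 30
      + (derivWithin f (Set.Icc 0 1) 1 - derivWithin f (Set.Icc 0 1) 0) / 60
      = (∫ t in (0:ℝ)..(1/2), ker (8/15) 5 0 t * (F t - m))
        + (∫ t in (1/2:ℝ)..1, ker 0 5 0 t * (F t - m)) := by
    rw [← hdw0, ← hdw1]
    linarith [hidP, hidQ, hsm1, hsm2, hB0, hB1, hBm, hsumf]
  rw [hX]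
  calc |(∫ t in (0:ℝ)..(1/2), ker (8/15) 5 0 t * (F t - m))
        + (∫ t in (1/2:ℝ)..1, ker 0 5 0 t * (F t - m))|
      ≤ |∫ t in (0:ℝ)..(1/2), ker (8/15) 5 0 t * (F t - m)|
        + |∫ t in (1/2:ℝ)..1, ker 0 5 0 t * (F t - m)| := abs_add_le _ _
    _ ≤ M * |-(1/230400:ℝ)| + M * |(1/230400:ℝ)| := add_le_add hb1 hb2
    _ = (Γ - γ) / 2 * peanoC 5 := by
        rw [hMdef, abs_neg, abs_of_nonneg (by norm_num : (0:ℝ) ≤ 1/230400)]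
        norm_num [peanoC]
        ring


theorem corrected_simpson_error_bound_Ck (k : ℕ) (hk : 2 ≤ k) (hk' : k ≤ 5)
    (f : ℝ → ℝ) (hf : ContDiffOn ℝ k f (Set.Icc 0 1)) (γ Γ : ℝ)
    (hγ : ∀ x ∈ Set.Icc (0:ℝ) 1, γ ≤ iteratedDerivWithin k f (Set.Icc 0 1) x)
    (hΓ : ∀ x ∈ Set.Icc (0:ℝ) 1, iteratedDerivWithin k f (Set.Icc 0 1) x ≤ Γ) :
    |(∫ x in (0:ℝ)..1, f x) -
        (7 * f 0 + 16 * f (1/2) + 7 * f 1) / 30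
        + (derivWithin f (Set.Icc 0 1) 1 - derivWithin f (Set.Icc 0 1) 0) / 60|
      ≤ (Γ - γ) / 2 * peanoC k := by
  interval_cases k
  · exact simpson_case_2 f (by exact_mod_cast hf) γ Γ hγ hΓ
  · exact simpson_case_3 f (by exact_mod_cast hf) γ Γ hγ hΓ
  · exact simpson_case_4 f (by exact_mod_cast hf) γ Γ hγ hΓ
  · exact simpson_case_5 f (by exact_mod_cast hf) γ Γ hγ hΓ
end

section
/- Let f ∈ C⁶([0,1]). Then the remainder R₆(f) = ∫₀¹ f(x) dx - (7f(0)+16f(1/2)+7f(1))/30 + (f'(1)-f'(0))/60 satisfies |R₆(f)| ≤ ‖f⁽⁶⁾‖_∞ / 604800, where ‖f⁽⁶⁾‖_∞ = sup_{x∈[0,1]} |f⁽⁶⁾(x)|. -/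
open Set MeasureTheory

lemma corrected_simpson_piece (f : ℝ → ℝ)
    (hf : ContDiffOn ℝ 6 f (Set.Icc 0 1))
    (p0 p1 p2 p3 p4 p5 : ℝ → ℝ)
    (h01 : ∀ x, HasDerivAt p0 (p1 x) x) (h12 : ∀ x, HasDerivAt p1 (p2 x) x)
    (h23 : ∀ x, HasDerivAt p2 (p3 x) x) (h34 : ∀ x, HasDerivAt p3 (p4 x) x)
    (h45 : ∀ x, HasDerivAt p4 (p5 x) x) (h56 : ∀ x, HasDerivAt p5 1 x)
    (a b : ℝ) (ha : 0 ≤ a) (hb : b ≤ 1) (hab : a ≤ b) :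
    ∫ x in a..b, p0 x * iteratedDerivWithin 6 f (Set.Icc 0 1) x
      = ((p0 b * iteratedDerivWithin 5 f (Set.Icc 0 1) b
          - p1 b * iteratedDerivWithin 4 f (Set.Icc 0 1) b
          + p2 b * iteratedDerivWithin 3 f (Set.Icc 0 1) b
          - p3 b * iteratedDerivWithin 2 f (Set.Icc 0 1) b
          + p4 b * iteratedDerivWithin 1 f (Set.Icc 0 1) b
          - p5 b * f b)
        - (p0 a * iteratedDerivWithin 5 f (Set.Icc 0 1) a
          - p1 a * iteratedDerivWithin 4 f (Set.Icc 0 1) a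
          + p2 a * iteratedDerivWithin 3 f (Set.Icc 0 1) a
          - p3 a * iteratedDerivWithin 2 f (Set.Icc 0 1) a
          + p4 a * iteratedDerivWithin 1 f (Set.Icc 0 1) a
          - p5 a * f a))
        + ∫ x in a..b, f x := by
  have hu : UniqueDiffOn ℝ (Set.Icc (0:ℝ) 1) := uniqueDiffOn_Icc one_pos
  have hz : iteratedDerivWithin 0 f (Set.Icc (0:ℝ) 1) = f := iteratedDerivWithin_zero
  have hsub : Set.Icc a b ⊆ Set.Icc (0:ℝ) 1 := Set.Icc_subset_Icc ha hb
  have hgc : ∀ j : ℕ, j ≤ 6 →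
      ContinuousOn (iteratedDerivWithin j f (Set.Icc 0 1)) (Set.Icc a b) := fun j hj =>
    (hf.continuousOn_iteratedDerivWithin (by exact_mod_cast hj) hu).mono hsub
  have hgd : ∀ j : ℕ, j < 6 → ∀ x ∈ Set.Ioo a b,
      HasDerivAt (iteratedDerivWithin j f (Set.Icc 0 1))
        (iteratedDerivWithin (j+1) f (Set.Icc 0 1) x) x := by
    intro j hj x hx
    have hx1 : x ∈ Set.Ioo (0:ℝ) 1 := ⟨lt_of_le_of_lt ha hx.1, lt_of_lt_of_le hx.2 hb⟩
    have hx' : x ∈ Set.Icc (0:ℝ) 1 := Set.mem_Icc.2 ⟨hx1.1.le, hx1.2.le⟩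
    have hd : DifferentiableWithinAt ℝ (iteratedDerivWithin j f (Set.Icc 0 1))
        (Set.Icc 0 1) x :=
      hf.differentiableOn_iteratedDerivWithin (by exact_mod_cast hj) hu x hx'
    have h2 := hd.hasDerivWithinAt
    rw [← iteratedDerivWithin_succ] at h2
    exact h2.hasDerivAt (Icc_mem_nhds hx1.1 hx1.2)
  have hc0 : Continuous p0 := by
    rw [continuous_iff_continuousAt]; exact fun x => (h01 x).continuousAt
  have hc1 : Continuous p1 := by
    rw [continuous_iff_continuousAt]; exact fun x => (h12 x).continuousAt
  have hc2 : Continuous p2 := by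
    rw [continuous_iff_continuousAt]; exact fun x => (h23 x).continuousAt
  have hc3 : Continuous p3 := by
    rw [continuous_iff_continuousAt]; exact fun x => (h34 x).continuousAt
  have hc4 : Continuous p4 := by
    rw [continuous_iff_continuousAt]; exact fun x => (h45 x).continuousAt
  have hc5 : Continuous p5 := by
    rw [continuous_iff_continuousAt]; exact fun x => (h56 x).continuousAt
  have hfc : ContinuousOn f (Set.Icc a b) := hf.continuousOn.mono hsub
  have hG : ∀ x ∈ Set.Ioo a b,
      HasDerivAt (fun y => p0 y * iteratedDerivWithin 5 f (Set.Icc 0 1) y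
          - p1 y * iteratedDerivWithin 4 f (Set.Icc 0 1) y
          + p2 y * iteratedDerivWithin 3 f (Set.Icc 0 1) y
          - p3 y * iteratedDerivWithin 2 f (Set.Icc 0 1) y
          + p4 y * iteratedDerivWithin 1 f (Set.Icc 0 1) y
          - p5 y * f y)
        (p0 x * iteratedDerivWithin 6 f (Set.Icc 0 1) x - f x) x := by
    intro x hx
    have H5 := hgd 5 (by norm_num) x hx
    have H4 := hgd 4 (by norm_num) x hx
    have H3 := hgd 3 (by norm_num) x hx
    have H2 := hgd 2 (by norm_num) x hx
    have H1 := hgd 1 (by norm_num) x hx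
    have H0 := hgd 0 (by norm_num) x hx
    rw [hz] at H0
    have comb := ((((((h01 x).mul H5).sub ((h12 x).mul H4)).add
        ((h23 x).mul H3)).sub ((h34 x).mul H2)).add
        ((h45 x).mul H1)).sub ((h56 x).mul H0)
    refine comb.congr_deriv ?_
    simp only [Nat.reduceAdd]
    ring
  have hGc : ContinuousOn (fun y => p0 y * iteratedDerivWithin 5 f (Set.Icc 0 1) y
          - p1 y * iteratedDerivWithin 4 f (Set.Icc 0 1) y
          + p2 y * iteratedDerivWithin 3 f (Set.Icc 0 1) y
          - p3 y * iteratedDerivWithin 2 f (Set.Icc 0 1) y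
          + p4 y * iteratedDerivWithin 1 f (Set.Icc 0 1) y
          - p5 y * f y) (Set.Icc a b) :=
    (((((hc0.continuousOn.mul (hgc 5 (by norm_num))).sub
        (hc1.continuousOn.mul (hgc 4 (by norm_num)))).add
        (hc2.continuousOn.mul (hgc 3 (by norm_num)))).sub
        (hc3.continuousOn.mul (hgc 2 (by norm_num)))).add
        (hc4.continuousOn.mul (hgc 1 (by norm_num)))).sub
        (hc5.continuousOn.mul hfc)
  have hi1 : IntervalIntegrable
      (fun x => p0 x * iteratedDerivWithin 6 f (Set.Icc 0 1) x) volume a b :=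
    (hc0.continuousOn.mul (hgc 6 le_rfl)).intervalIntegrable_of_Icc hab
  have hi2 : IntervalIntegrable f volume a b := hfc.intervalIntegrable_of_Icc hab
  have heq := intervalIntegral.integral_eq_sub_of_hasDerivAt_of_le hab hGc hG
    (hi1.sub hi2)
  rw [intervalIntegral.integral_sub hi1 hi2] at heq
  linarith [heq]

open Set MeasureTheory

set_option maxHeartbeats 1000000 in
theorem corrected_simpson_error_bound_C6 (f : ℝ → ℝ)
    (hf : ContDiffOn ℝ 6 f (Set.Icc 0 1)) :
    |(∫ x in (0:ℝ)..1, f x) -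
        (7 * f 0 + 16 * f (1/2) + 7 * f 1) / 30
        + (derivWithin f (Set.Icc 0 1) 1 - derivWithin f (Set.Icc 0 1) 0) / 60|
      ≤ (⨆ x : Set.Icc (0:ℝ) 1, |iteratedDerivWithin 6 f (Set.Icc 0 1) x|) / 604800 := by
  have hu : UniqueDiffOn ℝ (Set.Icc (0:ℝ) 1) := uniqueDiffOn_Icc one_pos
  -- derivative chains for the left kernel polynomial p and its derivatives
  have hP01 : ∀ x : ℝ, HasDerivAt (fun x : ℝ => x^6/720 - 7*x^5/3600 + x^4/1440)
      (x^5/120 - 7*x^4/720 + x^3/360) x := by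
    intro x
    have h := (((hasDerivAt_pow 6 x).div_const 720).sub
      (((hasDerivAt_pow 5 x).const_mul (7:ℝ)).div_const 3600)).add
      ((hasDerivAt_pow 4 x).div_const 1440)
    refine h.congr_deriv ?_
    push_cast; ring
  have hP12 : ∀ x : ℝ, HasDerivAt (fun x : ℝ => x^5/120 - 7*x^4/720 + x^3/360)
      (x^4/24 - 7*x^3/180 + x^2/120) x := by
    intro x
    have h := (((hasDerivAt_pow 5 x).div_const 120).sub
      (((hasDerivAt_pow 4 x).const_mul (7:ℝ)).div_const 720)).add
      ((hasDerivAt_pow 3 x).div_const 360)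
    refine h.congr_deriv ?_
    push_cast; ring
  have hP23 : ∀ x : ℝ, HasDerivAt (fun x : ℝ => x^4/24 - 7*x^3/180 + x^2/120)
      (x^3/6 - 7*x^2/60 + x/60) x := by
    intro x
    have h := (((hasDerivAt_pow 4 x).div_const 24).sub
      (((hasDerivAt_pow 3 x).const_mul (7:ℝ)).div_const 180)).add
      ((hasDerivAt_pow 2 x).div_const 120)
    refine h.congr_deriv ?_
    push_cast; ring
  have hP34 : ∀ x : ℝ, HasDerivAt (fun x : ℝ => x^3/6 - 7*x^2/60 + x/60)
      (x^2/2 - 7*x/30 + 1/60) x := by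
    intro x
    have h := (((hasDerivAt_pow 3 x).div_const 6).sub
      (((hasDerivAt_pow 2 x).const_mul (7:ℝ)).div_const 60)).add
      ((hasDerivAt_id x).div_const 60)
    refine h.congr_deriv ?_
    push_cast; ring
  have hP45 : ∀ x : ℝ, HasDerivAt (fun x : ℝ => x^2/2 - 7*x/30 + 1/60)
      (x - 7/30) x := by
    intro x
    have h := ((((hasDerivAt_pow 2 x).div_const 2).sub
      (((hasDerivAt_id x).const_mul (7:ℝ)).div_const 30)).add_const (1/60))
    refine h.congr_deriv ?_
    push_cast; ring
  have hP56 : ∀ x : ℝ, HasDerivAt (fun x : ℝ => x - 7/30) 1 x := by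
    intro x
    exact (hasDerivAt_id x).sub_const _
  -- derivative chains for the right kernel polynomial q
  have hQ01 : ∀ x : ℝ, HasDerivAt
      (fun x : ℝ => x^6/720 - 23*x^5/3600 + 17*x^4/1440 - x^3/90 + x^2/180 - x/720 + 1/7200)
      (x^5/120 - 23*x^4/720 + 17*x^3/360 - x^2/30 + x/90 - 1/720) x := by
    intro x
    have h := (((((((hasDerivAt_pow 6 x).div_const 720).sub
      (((hasDerivAt_pow 5 x).const_mul (23:ℝ)).div_const 3600)).add
      (((hasDerivAt_pow 4 x).const_mul (17:ℝ)).div_const 1440)).sub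
      ((hasDerivAt_pow 3 x).div_const 90)).add
      ((hasDerivAt_pow 2 x).div_const 180)).sub
      ((hasDerivAt_id x).div_const 720)).add_const (1/7200)
    refine h.congr_deriv ?_
    push_cast; ring
  have hQ12 : ∀ x : ℝ, HasDerivAt
      (fun x : ℝ => x^5/120 - 23*x^4/720 + 17*x^3/360 - x^2/30 + x/90 - 1/720)
      (x^4/24 - 23*x^3/180 + 17*x^2/120 - x/15 + 1/90) x := by
    intro x
    have h := ((((((hasDerivAt_pow 5 x).div_const 120).sub
      (((hasDerivAt_pow 4 x).const_mul (23:ℝ)).div_const 720)).add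
      (((hasDerivAt_pow 3 x).const_mul (17:ℝ)).div_const 360)).sub
      ((hasDerivAt_pow 2 x).div_const 30)).add
      ((hasDerivAt_id x).div_const 90)).sub_const (1/720)
    refine h.congr_deriv ?_
    push_cast; ring
  have hQ23 : ∀ x : ℝ, HasDerivAt
      (fun x : ℝ => x^4/24 - 23*x^3/180 + 17*x^2/120 - x/15 + 1/90)
      (x^3/6 - 23*x^2/60 + 17*x/60 - 1/15) x := by
    intro x
    have h := (((((hasDerivAt_pow 4 x).div_const 24).sub
      (((hasDerivAt_pow 3 x).const_mul (23:ℝ)).div_const 180)).add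
      (((hasDerivAt_pow 2 x).const_mul (17:ℝ)).div_const 120)).sub
      ((hasDerivAt_id x).div_const 15)).add_const (1/90)
    refine h.congr_deriv ?_
    push_cast; ring
  have hQ34 : ∀ x : ℝ, HasDerivAt
      (fun x : ℝ => x^3/6 - 23*x^2/60 + 17*x/60 - 1/15)
      (x^2/2 - 23*x/30 + 17/60) x := by
    intro x
    have h := ((((hasDerivAt_pow 3 x).div_const 6).sub
      (((hasDerivAt_pow 2 x).const_mul (23:ℝ)).div_const 60)).add
      (((hasDerivAt_id x).const_mul (17:ℝ)).div_const 60)).sub_const (1/15)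
    refine h.congr_deriv ?_
    push_cast; ring
  have hQ45 : ∀ x : ℝ, HasDerivAt
      (fun x : ℝ => x^2/2 - 23*x/30 + 17/60) (x - 23/30) x := by
    intro x
    have h := (((hasDerivAt_pow 2 x).div_const 2).sub
      (((hasDerivAt_id x).const_mul (23:ℝ)).div_const 30)).add_const (17/60)
    refine h.congr_deriv ?_
    push_cast; ring
  have hQ56 : ∀ x : ℝ, HasDerivAt (fun x : ℝ => x - 23/30) 1 x := by
    intro x
    exact (hasDerivAt_id x).sub_const _
  -- antiderivatives of p and q
  have hAP : ∀ x : ℝ, HasDerivAt (fun x : ℝ => x^7/5040 - 7*x^6/21600 + x^5/7200)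
      (x^6/720 - 7*x^5/3600 + x^4/1440) x := by
    intro x
    have h := (((hasDerivAt_pow 7 x).div_const 5040).sub
      (((hasDerivAt_pow 6 x).const_mul (7:ℝ)).div_const 21600)).add
      ((hasDerivAt_pow 5 x).div_const 7200)
    refine h.congr_deriv ?_
    push_cast; ring
  have hAQ : ∀ x : ℝ, HasDerivAt
      (fun x : ℝ => x^7/5040 - 23*x^6/21600 + 17*x^5/7200 - x^4/360 + x^3/540 - x^2/1440 + x/7200)
      (x^6/720 - 23*x^5/3600 + 17*x^4/1440 - x^3/90 + x^2/180 - x/720 + 1/7200) x := by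
    intro x
    have h := ((((((hasDerivAt_pow 7 x).div_const 5040).sub
      (((hasDerivAt_pow 6 x).const_mul (23:ℝ)).div_const 21600)).add
      (((hasDerivAt_pow 5 x).const_mul (17:ℝ)).div_const 7200)).sub
      ((hasDerivAt_pow 4 x).div_const 360)).add
      ((hasDerivAt_pow 3 x).div_const 540)).sub
      ((hasDerivAt_pow 2 x).div_const 1440) |>.add ((hasDerivAt_id x).div_const 7200)
    refine h.congr_deriv ?_
    push_cast; ring
  -- continuity of the kernels
  have hcP : Continuous (fun x : ℝ => x^6/720 - 7*x^5/3600 + x^4/1440) := by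
    rw [continuous_iff_continuousAt]; exact fun x => (hP01 x).continuousAt
  have hcQ : Continuous
      (fun x : ℝ => x^6/720 - 23*x^5/3600 + 17*x^4/1440 - x^3/90 + x^2/180 - x/720 + 1/7200) := by
    rw [continuous_iff_continuousAt]; exact fun x => (hQ01 x).continuousAt
  -- the sup bound
  set M := ⨆ x : Set.Icc (0:ℝ) 1, |iteratedDerivWithin 6 f (Set.Icc 0 1) x| with hMdef
  have hI6c : ContinuousOn (iteratedDerivWithin 6 f (Set.Icc 0 1)) (Set.Icc 0 1) :=
    hf.continuousOn_iteratedDerivWithin (by norm_num) hu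
  have hbdd : BddAbove
      (Set.range fun x : Set.Icc (0:ℝ) 1 => |iteratedDerivWithin 6 f (Set.Icc 0 1) x|) := by
    have h := (isCompact_Icc.image_of_continuousOn hI6c.abs).bddAbove
    rwa [Set.image_eq_range] at h
  have hM : ∀ x ∈ Set.Icc (0:ℝ) 1, |iteratedDerivWithin 6 f (Set.Icc 0 1) x| ≤ M :=
    fun x hx => le_ciSup hbdd ⟨x, hx⟩
  have hM0 : 0 ≤ M := le_trans (abs_nonneg _) (hM 0 ⟨le_rfl, zero_le_one⟩)
  -- piece identities
  have A := corrected_simpson_piece f hf _ _ _ _ _ _ hP01 hP12 hP23 hP34 hP45 hP56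
    0 (1/2) le_rfl (by norm_num) (by norm_num)
  have B := corrected_simpson_piece f hf _ _ _ _ _ _ hQ01 hQ12 hQ23 hQ34 hQ45 hQ56
    (1/2) 1 (by norm_num) le_rfl (by norm_num)
  -- splitting the integral of f
  have hfint : ∀ a b : ℝ, 0 ≤ a → b ≤ 1 → a ≤ b → IntervalIntegrable f volume a b :=
    fun a b ha hb hab =>
      (hf.continuousOn.mono (Set.Icc_subset_Icc ha hb)).intervalIntegrable_of_Icc hab
  have hsplitf : (∫ x in (0:ℝ)..(1/2), f x) + (∫ x in (1/2:ℝ)..1, f x)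
      = ∫ x in (0:ℝ)..1, f x :=
    intervalIntegral.integral_add_adjacent_intervals
      (hfint 0 (1/2) le_rfl (by norm_num) (by norm_num))
      (hfint (1/2) 1 (by norm_num) le_rfl (by norm_num))
  have e1a : derivWithin f (Set.Icc 0 1) 0 = iteratedDerivWithin 1 f (Set.Icc 0 1) 0 :=
    (congrFun iteratedDerivWithin_one _).symm
  have e1b : derivWithin f (Set.Icc 0 1) 1 = iteratedDerivWithin 1 f (Set.Icc 0 1) 1 :=
    (congrFun iteratedDerivWithin_one _).symm
  -- the key algebraic identity
  have hsum : (∫ x in (0:ℝ)..1, f x) -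
        (7 * f 0 + 16 * f (1/2) + 7 * f 1) / 30
        + (derivWithin f (Set.Icc 0 1) 1 - derivWithin f (Set.Icc 0 1) 0) / 60
      = (∫ x in (0:ℝ)..(1/2), (fun x : ℝ => x^6/720 - 7*x^5/3600 + x^4/1440) x *
            iteratedDerivWithin 6 f (Set.Icc 0 1) x)
        + (∫ x in (1/2:ℝ)..1,
            (fun x : ℝ => x^6/720 - 23*x^5/3600 + 17*x^4/1440 - x^3/90 + x^2/180 - x/720 + 1/7200) x *
            iteratedDerivWithin 6 f (Set.Icc 0 1) x) := by
    rw [A, B, e1a, e1b, ← hsplitf]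
    norm_num
    ring
  rw [hsum]
  have hp0nn : ∀ x ∈ Set.Icc (0:ℝ) (1/2), 0 ≤ x^6/720 - 7*x^5/3600 + x^4/1440 := by
    intro x hx
    nlinarith [mul_nonneg (pow_nonneg hx.1 4) (sq_nonneg (10*x-7)), pow_nonneg hx.1 4]
  have hq0nn : ∀ x ∈ Set.Icc (1/2:ℝ) 1,
      0 ≤ x^6/720 - 23*x^5/3600 + 17*x^4/1440 - x^3/90 + x^2/180 - x/720 + 1/7200 := by
    intro x hx
    have h1 : (0:ℝ) ≤ (1-x)^4 := by positivity
    nlinarith [mul_nonneg h1 (sq_nonneg (10*x-3)), h1]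
  have hIb1 : (∫ x in (0:ℝ)..(1/2),
      (fun x : ℝ => x^6/720 - 7*x^5/3600 + x^4/1440) x * M) = M/1209600 := by
    rw [intervalIntegral.integral_eq_sub_of_hasDerivAt
      (f := fun x : ℝ => (x^7/5040 - 7*x^6/21600 + x^5/7200) * M)
      (fun x _ => (hAP x).mul_const M)
      ((hcP.mul continuous_const).intervalIntegrable _ _)]
    norm_num
    ring
  have hIb2 : (∫ x in (1/2:ℝ)..1,
      (fun x : ℝ => x^6/720 - 23*x^5/3600 + 17*x^4/1440 - x^3/90 + x^2/180 - x/720 + 1/7200) x * M)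
      = M/1209600 := by
    rw [intervalIntegral.integral_eq_sub_of_hasDerivAt
      (f := fun x : ℝ => (x^7/5040 - 23*x^6/21600 + 17*x^5/7200 - x^4/360 + x^3/540 - x^2/1440 + x/7200) * M)
      (fun x _ => (hAQ x).mul_const M)
      ((hcQ.mul continuous_const).intervalIntegrable _ _)]
    norm_num
    ring
  have hb1 : |∫ x in (0:ℝ)..(1/2), (fun x : ℝ => x^6/720 - 7*x^5/3600 + x^4/1440) x *
      iteratedDerivWithin 6 f (Set.Icc 0 1) x| ≤ M/1209600 := by
    have h1 := intervalIntegral.abs_integral_le_integral_abs (μ := volume) (a := (0:ℝ)) (b := 1/2)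
      (f := fun x => (fun x : ℝ => x^6/720 - 7*x^5/3600 + x^4/1440) x *
        iteratedDerivWithin 6 f (Set.Icc 0 1) x) (by norm_num)
    have h2 : (∫ x in (0:ℝ)..(1/2), |(fun x : ℝ => x^6/720 - 7*x^5/3600 + x^4/1440) x *
          iteratedDerivWithin 6 f (Set.Icc 0 1) x|)
        ≤ ∫ x in (0:ℝ)..(1/2), (fun x : ℝ => x^6/720 - 7*x^5/3600 + x^4/1440) x * M := by
      refine intervalIntegral.integral_mono_on (by norm_num) ?_ ?_ ?_
      · exact ((hcP.continuousOn.mul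
          (hI6c.mono (Set.Icc_subset_Icc le_rfl (by norm_num)))).abs).intervalIntegrable_of_Icc
          (by norm_num)
      · exact (hcP.mul continuous_const).intervalIntegrable _ _
      · intro x hx
        rw [abs_mul]
        exact mul_le_mul (le_of_eq (abs_of_nonneg (hp0nn x hx)))
          (hM x (Set.Icc_subset_Icc le_rfl (by norm_num) hx)) (abs_nonneg _) (hp0nn x hx)
    linarith [h1, h2, hIb1.le, hIb1.ge]
  have hb2 : |∫ x in (1/2:ℝ)..1,
      (fun x : ℝ => x^6/720 - 23*x^5/3600 + 17*x^4/1440 - x^3/90 + x^2/180 - x/720 + 1/7200) x *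
      iteratedDerivWithin 6 f (Set.Icc 0 1) x| ≤ M/1209600 := by
    have h1 := intervalIntegral.abs_integral_le_integral_abs (μ := volume) (a := (1/2:ℝ)) (b := 1)
      (f := fun x => (fun x : ℝ => x^6/720 - 23*x^5/3600 + 17*x^4/1440 - x^3/90 + x^2/180 - x/720 + 1/7200) x *
        iteratedDerivWithin 6 f (Set.Icc 0 1) x) (by norm_num)
    have h2 : (∫ x in (1/2:ℝ)..1, |(fun x : ℝ => x^6/720 - 23*x^5/3600 + 17*x^4/1440 - x^3/90 + x^2/180 - x/720 + 1/7200) x *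
          iteratedDerivWithin 6 f (Set.Icc 0 1) x|)
        ≤ ∫ x in (1/2:ℝ)..1,
          (fun x : ℝ => x^6/720 - 23*x^5/3600 + 17*x^4/1440 - x^3/90 + x^2/180 - x/720 + 1/7200) x * M := by
      refine intervalIntegral.integral_mono_on (by norm_num) ?_ ?_ ?_
      · exact ((hcQ.continuousOn.mul
          (hI6c.mono (Set.Icc_subset_Icc (by norm_num) le_rfl))).abs).intervalIntegrable_of_Icc
          (by norm_num)
      · exact (hcQ.mul continuous_const).intervalIntegrable _ _
      · intro x hx
        rw [abs_mul]
        exact mul_le_mul (le_of_eq (abs_of_nonneg (hq0nn x hx)))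
          (hM x (Set.Icc_subset_Icc (by norm_num) le_rfl hx)) (abs_nonneg _) (hq0nn x hx)
    linarith [h1, h2, hIb2.le, hIb2.ge]
  refine le_trans (abs_add_le _ _) ?_
  linarith [hb1, hb2]
end

section
/- Let f ∈ C⁶([a,b]), n ≥ 1, h = (b-a)/(2n), x_j = a + jh for j = 0,…,2n. Then the composite corrected Simpson approximation (h/15)·Σ_{j odd, 1≤j≤2n-1} [7f(x_{j-1}) + 16f(x_j) + 7f(x_{j+1})] - (h²/15)[f'(b) - f'(a)] differs from ∫_a^b f(x) dx by at most (1/2)·(2⁷/604800)·h⁶·(b-a)·‖f⁽⁶⁾‖_∞, where ‖f⁽⁶⁾‖_∞ = sup_{[a,b]} |f⁽⁶⁾|. -/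
/-!
Folding a panel `[c - h, c + h]` onto `[0, h]` through `F u = f (c + u) + f (c - u)` makes the
odd derivatives of `F` vanish at `0`. Combining the Taylor expansions with integral remainder of
`∫₀ʰ F`, `F h` and `F' h` then writes the panel error as `∫₀ʰ K(t) F⁽⁶⁾(t) dt` for a nonnegative
Peano kernel `K` with `∫₀ʰ K = h⁷/9450`; since `|F⁽⁶⁾| ≤ 2 ‖f⁽⁶⁾‖`, each panel errs by at most
`h⁷/4725 = D₆ h⁷ ‖f⁽⁶⁾‖`. Over the `n` panels the derivative corrections telescope, and
`n h⁷ = h⁶ (b - a) / 2`.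
-/

open Set intervalIntegral MeasureTheory

/-- Carrying the whole sequence of derivatives avoids comparing `iteratedDerivWithin` on
different sets when passing to subintervals and to folded functions. -/
structure IsDerivChainOn (g : ℕ → ℝ → ℝ) (N : ℕ) (s : Set ℝ) : Prop where
  hasDerivWithinAt : ∀ k < N, ∀ x ∈ s, HasDerivWithinAt (g k) (g (k + 1) x) s x
  continuousOn : ContinuousOn (g N) s

namespace IsDerivChainOn

variable {g : ℕ → ℝ → ℝ} {N : ℕ} {s : Set ℝ}

theorem continuousOn_of_le (hg : IsDerivChainOn g N s) {k : ℕ} (hk : k ≤ N) :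
    ContinuousOn (g k) s := by
  rcases hk.eq_or_lt with rfl | hk
  · exact hg.continuousOn
  · exact fun x hx ↦ (hg.hasDerivWithinAt k hk x hx).continuousWithinAt

theorem shift {m : ℕ} (hg : IsDerivChainOn g (N + m) s) :
    IsDerivChainOn (fun k ↦ g (k + m)) N s where
  hasDerivWithinAt k hk x hx := by
    simpa only [Nat.add_right_comm k 1 m] using hg.hasDerivWithinAt (k + m) (by omega) x hx
  continuousOn := hg.continuousOn

theorem mono {t : Set ℝ} (hg : IsDerivChainOn g N s) (hts : t ⊆ s) : IsDerivChainOn g N t where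
  hasDerivWithinAt k hk x hx := (hg.hasDerivWithinAt k hk x (hts hx)).mono hts
  continuousOn := hg.continuousOn.mono hts

theorem of_le (hg : IsDerivChainOn g N s) {M : ℕ} (hMN : M ≤ N) : IsDerivChainOn g M s where
  hasDerivWithinAt k hk := hg.hasDerivWithinAt k (by omega)
  continuousOn := hg.continuousOn_of_le hMN

theorem integral_eq_sub {a b : ℝ} (hab : a ≤ b) (hg : IsDerivChainOn g 1 (Icc a b)) :
    ∫ t in a..b, g 1 t = g 0 b - g 0 a :=
  integral_eq_sub_of_hasDerivAt_of_le hab (hg.continuousOn_of_le zero_le_one)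
    (fun x hx ↦ (hg.hasDerivWithinAt 0 one_pos x (Ioo_subset_Icc_self hx)).hasDerivAt
      (Icc_mem_nhds hx.1 hx.2))
    (hg.continuousOn.intervalIntegrable_of_Icc hab)

/-- Taylor's formula with integral remainder, for an antiderivative of `g 0`. -/
theorem integral_eq_sum_add_integral {a b : ℝ} (hab : a ≤ b)
    (hg : IsDerivChainOn g N (Icc a b)) :
    ∫ t in a..b, g 0 t = ∑ j ∈ Finset.range N, g j a * (b - a) ^ (j + 1) / (j + 1).factorial
      + ∫ t in a..b, (b - t) ^ N / N.factorial * g N t := by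
  induction N with
  | zero => simp
  | succ N ih =>
    have hu : ∀ x ∈ uIcc a b, HasDerivWithinAt (fun t ↦ -((b - t) ^ (N + 1) / (N + 1).factorial))
        ((b - x) ^ N / N.factorial) (uIcc a b) x := by
      intro x _
      have := (((hasDerivAt_id' x).const_sub b).fun_pow (N + 1)).div_const
        ((N + 1).factorial : ℝ) |>.neg
      refine this.hasDerivWithinAt.congr_deriv ?_
      rw [Nat.factorial_succ]
      push_cast
      field_simp
    have parts := integral_mul_deriv_eq_deriv_mul_of_hasDerivWithinAt hu
      (by rw [uIcc_of_le hab]; exact hg.hasDerivWithinAt N N.lt_succ_self)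
      (Continuous.intervalIntegrable (by fun_prop) _ _)
      (hg.continuousOn.intervalIntegrable_of_Icc hab)
    simp only [sub_self, neg_mul, intervalIntegral.integral_neg, ne_eq, Nat.add_one_ne_zero,
      not_false_eq_true, zero_pow, zero_div, neg_zero, zero_mul] at parts
    rw [ih (hg.of_le N.le_succ), Finset.sum_range_succ]
    linear_combination parts

end IsDerivChainOn

theorem ContDiffOn.isDerivChainOn_iteratedDerivWithin {f : ℝ → ℝ} {N : ℕ} {s : Set ℝ}
    (hf : ContDiffOn ℝ N f s) (hs : UniqueDiffOn ℝ s) :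
    IsDerivChainOn (fun k ↦ iteratedDerivWithin k f s) N s where
  hasDerivWithinAt k hk x hx := by
    rw [iteratedDerivWithin_succ]
    exact (hf.differentiableOn_iteratedDerivWithin (by exact_mod_cast hk) hs x hx).hasDerivWithinAt
  continuousOn := hf.continuousOn_iteratedDerivWithin le_rfl hs

def symmetrize (d : ℕ → ℝ → ℝ) (c : ℝ) (k : ℕ) (u : ℝ) : ℝ :=
  d k (c + u) + (-1) ^ k * d k (c - u)

theorem symmetrize_apply_zero_of_odd (d : ℕ → ℝ → ℝ) (c : ℝ) {k : ℕ} (hk : Odd k) :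
    symmetrize d c k 0 = 0 := by
  simp [symmetrize, hk.neg_one_pow]

theorem isDerivChainOn_symmetrize {d : ℕ → ℝ → ℝ} {N : ℕ} {c h : ℝ}
    (hd : IsDerivChainOn d N (Icc (c - h) (c + h))) :
    IsDerivChainOn (symmetrize d c) N (Icc 0 h) := by
  have maps_add : MapsTo (c + ·) (Icc 0 h) (Icc (c - h) (c + h)) :=
    fun u hu ↦ ⟨by linarith [hu.1, hu.2], by linarith [hu.2]⟩
  have maps_sub : MapsTo (c - ·) (Icc 0 h) (Icc (c - h) (c + h)) :=
    fun u hu ↦ ⟨by linarith [hu.2], by linarith [hu.1, hu.2]⟩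
  refine ⟨fun k hk u hu ↦ ?_, ?_⟩
  · have hadd := (hd.hasDerivWithinAt k hk _ (maps_add hu)).comp u
      ((hasDerivAt_id' u).const_add c).hasDerivWithinAt maps_add
    have hsub := (hd.hasDerivWithinAt k hk _ (maps_sub hu)).comp u
      ((hasDerivAt_id' u).const_sub c).hasDerivWithinAt maps_sub
    refine (hadd.add (hsub.const_mul ((-1) ^ k))).congr_deriv ?_
    simp only [symmetrize, pow_succ]
    ring
  · exact (hd.continuousOn.comp (by fun_prop) maps_add).add
      (continuousOn_const.mul (hd.continuousOn.comp (by fun_prop) maps_sub))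

theorem integral_symmetrize_zero {d : ℕ → ℝ → ℝ} {c h : ℝ} (hh : 0 ≤ h)
    (hd : ContinuousOn (d 0) (Icc (c - h) (c + h))) :
    ∫ u in (0 : ℝ)..h, symmetrize d c 0 u = ∫ x in (c - h)..(c + h), d 0 x := by
  have hint : ∀ x y, x ∈ Icc (c - h) (c + h) → y ∈ Icc (c - h) (c + h) →
      IntervalIntegrable (d 0) volume x y := fun x y hx hy ↦
    (hd.mono (uIcc_subset_Icc hx hy)).intervalIntegrable
  have hl : c - h ∈ Icc (c - h) (c + h) := ⟨le_rfl, by linarith⟩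
  have hc : c ∈ Icc (c - h) (c + h) := ⟨by linarith, by linarith⟩
  have hr : c + h ∈ Icc (c - h) (c + h) := ⟨by linarith, le_rfl⟩
  simp only [symmetrize, pow_zero, one_mul]
  rw [intervalIntegral.integral_add, integral_comp_add_left (d 0), integral_comp_sub_left (d 0),
    add_zero, sub_zero, add_comm, integral_add_adjacent_intervals (hint _ _ hl hc) (hint _ _ hc hr)]
  · simpa using (hint _ _ hc hr).comp_add_left c
  · simpa using ((hint _ _ hl hc).comp_sub_left c).symm

/-- The Peano kernel of the folded rule: it equals
`(h - t)^6/6! - (7h/15) (h - t)^5/5! + (h²/15) (h - t)^4/4!`. -/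
noncomputable def correctedSimpsonKernel (h t : ℝ) : ℝ :=
  (h - t) ^ 4 * (5 * t ^ 2 + 4 * h * t + h ^ 2) / 3600

theorem correctedSimpsonKernel_nonneg {h t : ℝ} (ht₀ : 0 ≤ t) (hth : t ≤ h) :
    0 ≤ correctedSimpsonKernel h t := by
  have : 0 ≤ 5 * t ^ 2 + 4 * h * t + h ^ 2 := by nlinarith
  unfold correctedSimpsonKernel
  positivity

theorem integral_correctedSimpsonKernel (h : ℝ) :
    ∫ t in (0 : ℝ)..h, correctedSimpsonKernel h t = h ^ 7 / 9450 := by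
  have : ∀ s, correctedSimpsonKernel h (h - s) =
      h ^ 2 / 360 * s ^ 4 - 7 * h / 1800 * s ^ 5 + 1 / 720 * s ^ 6 := by
    intro s; unfold correctedSimpsonKernel; ring
  have e := integral_comp_sub_left (fun t ↦ correctedSimpsonKernel h t) h (a := 0) (b := h)
  simp only [sub_self, sub_zero, this] at e
  rw [← e, intervalIntegral.integral_add, intervalIntegral.integral_sub]
  · simp only [intervalIntegral.integral_const_mul, integral_pow]
    ring
  all_goals exact Continuous.intervalIntegrable (by fun_prop) _ _

theorem integral_sub_foldedCorrectedSimpson_eq {g : ℕ → ℝ → ℝ} {h : ℝ} (hh : 0 ≤ h)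
    (hg : IsDerivChainOn g 6 (Icc 0 h)) (hg₁ : g 1 0 = 0) (hg₃ : g 3 0 = 0) (hg₅ : g 5 0 = 0) :
    (∫ t in (0 : ℝ)..h, g 0 t) - (h / 15 * (7 * g 0 h + 8 * g 0 0) - h ^ 2 / 15 * g 1 h) =
      ∫ t in (0 : ℝ)..h, correctedSimpsonKernel h t * g 6 t := by
  have taylor₆ := hg.integral_eq_sum_add_integral hh
  have taylor₅ := (hg.shift (m := 1) (N := 5)).integral_eq_sum_add_integral hh
  have taylor₄ := (hg.shift (m := 2) (N := 4)).integral_eq_sum_add_integral hh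
  have ftc₀ := (hg.of_le (by norm_num : 1 ≤ 6)).integral_eq_sub hh
  have ftc₁ := ((hg.shift (m := 1) (N := 5)).of_le (by norm_num : 1 ≤ 5)).integral_eq_sub hh
  have hint : ∀ k, IntervalIntegrable (fun t ↦ (h - t) ^ k / k.factorial * g 6 t) volume 0 h :=
    fun k ↦ ((Continuous.continuousOn (by fun_prop)).mul hg.continuousOn).intervalIntegrable_of_Icc
      hh
  have kernel : ∫ t in (0 : ℝ)..h, correctedSimpsonKernel h t * g 6 t =
      (∫ t in (0 : ℝ)..h, (h - t) ^ 6 / (6).factorial * g 6 t)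
        - 7 * h / 15 * (∫ t in (0 : ℝ)..h, (h - t) ^ 5 / (5).factorial * g 6 t)
        + h ^ 2 / 15 * ∫ t in (0 : ℝ)..h, (h - t) ^ 4 / (4).factorial * g 6 t := by
    rw [← intervalIntegral.integral_const_mul, ← intervalIntegral.integral_const_mul,
      ← intervalIntegral.integral_sub (hint 6) ((hint 5).const_mul _),
      ← intervalIntegral.integral_add ((hint 6).sub ((hint 5).const_mul _))
        ((hint 4).const_mul _)]
    refine integral_congr fun t _ ↦ ?_
    simp only [correctedSimpsonKernel, Nat.factorial]
    push_cast
    ring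
  rw [kernel]
  norm_num [Finset.sum_range_succ, Nat.factorial, hg₁, hg₃, hg₅]
    at taylor₆ taylor₅ taylor₄ ftc₁ ⊢
  linear_combination taylor₆ + 7 * h / 15 * ftc₀ - 7 * h / 15 * taylor₅ - h ^ 2 / 15 * ftc₁
    + h ^ 2 / 15 * taylor₄

noncomputable def correctedSimpsonError (f f' : ℝ → ℝ) (c h : ℝ) : ℝ :=
  (∫ x in (c - h)..(c + h), f x) -
    (h / 15 * (7 * f (c - h) + 16 * f c + 7 * f (c + h)) - h ^ 2 / 15 * (f' (c + h) - f' (c - h)))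

theorem correctedSimpsonError_eq_integral_kernel {d : ℕ → ℝ → ℝ} {c h : ℝ} (hh : 0 ≤ h)
    (hd : IsDerivChainOn d 6 (Icc (c - h) (c + h))) :
    correctedSimpsonError (d 0) (d 1) c h =
      ∫ t in (0 : ℝ)..h, correctedSimpsonKernel h t * symmetrize d c 6 t := by
  rw [← integral_sub_foldedCorrectedSimpson_eq hh (isDerivChainOn_symmetrize hd)
    (symmetrize_apply_zero_of_odd d c odd_one) (symmetrize_apply_zero_of_odd d c (by decide))
    (symmetrize_apply_zero_of_odd d c (by decide)),
    integral_symmetrize_zero hh (hd.continuousOn_of_le (by norm_num))]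
  simp only [correctedSimpsonError, symmetrize]
  ring_nf

theorem abs_correctedSimpsonError_le {d : ℕ → ℝ → ℝ} {c h M : ℝ} (hh : 0 ≤ h)
    (hd : IsDerivChainOn d 6 (Icc (c - h) (c + h)))
    (hM : ∀ x ∈ Icc (c - h) (c + h), |d 6 x| ≤ M) :
    |correctedSimpsonError (d 0) (d 1) c h| ≤ 2 ^ 7 / 604800 * h ^ 7 * M := by
  have hF : ∀ t ∈ Ioc 0 h, |symmetrize d c 6 t| ≤ 2 * M := fun t ht ↦ calc
    |symmetrize d c 6 t| ≤ |d 6 (c + t)| + |d 6 (c - t)| := by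
      norm_num only [symmetrize, one_mul]
      exact abs_add_le _ _
    _ ≤ M + M := add_le_add (hM _ ⟨by linarith [ht.1], by linarith [ht.2]⟩)
        (hM _ ⟨by linarith [ht.2], by linarith [ht.1]⟩)
    _ = 2 * M := by ring
  rw [correctedSimpsonError_eq_integral_kernel hh hd]
  calc |∫ t in (0 : ℝ)..h, correctedSimpsonKernel h t * symmetrize d c 6 t|
      ≤ ∫ t in (0 : ℝ)..h, correctedSimpsonKernel h t * (2 * M) := by
        rw [← Real.norm_eq_abs]
        refine norm_integral_le_of_norm_le hh (ae_of_all _ fun t ht ↦ ?_)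
          ((by unfold correctedSimpsonKernel; fun_prop :
            Continuous fun t ↦ correctedSimpsonKernel h t * (2 * M)).intervalIntegrable _ _)
        have hK := correctedSimpsonKernel_nonneg ht.1.le ht.2
        rw [Real.norm_eq_abs, abs_mul, abs_of_nonneg hK]
        exact mul_le_mul_of_nonneg_left (hF t ht) hK
    _ = 2 ^ 7 / 604800 * h ^ 7 * M := by
        rw [intervalIntegral.integral_mul_const, integral_correctedSimpsonKernel]
        ring

theorem integral_sub_compositeCorrectedSimpson_eq_sum {f f' : ℝ → ℝ} {a h : ℝ} {n : ℕ}
    (hh : 0 ≤ h) (hf : ContinuousOn f (Icc a (a + 2 * n * h))) :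
    (∫ x in a..a + 2 * n * h, f x) -
        (h / 15 * ∑ i ∈ Finset.range n,
            (7 * f (a + (2 * i : ℕ) * h) + 16 * f (a + (2 * i + 1 : ℕ) * h)
              + 7 * f (a + (2 * i + 2 : ℕ) * h))
          - h ^ 2 / 15 * (f' (a + 2 * n * h) - f' a)) =
      ∑ i ∈ Finset.range n, correctedSimpsonError f f' (a + (2 * i + 1 : ℕ) * h) h := by
  set x : ℕ → ℝ := fun i ↦ a + (2 * i : ℕ) * h with hx
  have hx_mono : Monotone x := fun i j hij ↦ by
    simp only [hx]; gcongr
  have hx_mem : ∀ i ≤ n, x i ∈ Icc a (a + 2 * n * h) := fun i hi ↦ by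
    simp only [hx, mem_Icc, Nat.cast_mul, Nat.cast_ofNat, le_add_iff_nonneg_right]
    exact ⟨by positivity, by gcongr⟩
  have hint : ∀ i < n, IntervalIntegrable f volume (x i) (x (i + 1)) := fun i hi ↦
    (hf.mono (Icc_subset_Icc (hx_mem i hi.le).1 (hx_mem (i + 1) hi).2)).intervalIntegrable_of_Icc
      (hx_mono i.le_succ)
  have hx₀ : x 0 = a := by simp [hx]
  have hxₙ : x n = a + 2 * n * h := by simp [hx]
  have integral_split := sum_integral_adjacent_intervals hint
  have telescope := Finset.sum_range_sub (f' ∘ x) n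
  rw [hx₀, hxₙ] at integral_split
  rw [Function.comp_apply, Function.comp_apply, hx₀, hxₙ] at telescope
  rw [← integral_split, ← telescope, Finset.mul_sum, Finset.mul_sum, ← Finset.sum_sub_distrib,
    ← Finset.sum_sub_distrib]
  refine Finset.sum_congr rfl fun i _ ↦ ?_
  have hl : a + (2 * i + 1 : ℕ) * h - h = x i := by simp only [hx]; push_cast; ring
  have hr : a + (2 * i + 1 : ℕ) * h + h = x (i + 1) := by simp only [hx]; push_cast; ring
  have hr' : a + (2 * i + 2 : ℕ) * h = x (i + 1) := by simp only [hx]; push_cast; ring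
  rw [correctedSimpsonError, hl, hr, hr', Function.comp_apply, Function.comp_apply]

theorem ContinuousOn.abs_le_iSup_abs {g : ℝ → ℝ} {s : Set ℝ} (hs : IsCompact s)
    (hg : ContinuousOn g s) {x : ℝ} (hx : x ∈ s) : |g x| ≤ ⨆ y : s, |g y| := by
  refine le_ciSup (f := fun y : s ↦ |g y|) ?_ ⟨x, hx⟩
  simpa only [image_eq_range] using hs.bddAbove_image hg.abs

theorem composite_corrected_simpson_error (f : ℝ → ℝ) (a b : ℝ) (hab : a < b)
    (n : ℕ) (hn : 1 ≤ n) (h : ℝ) (hh : h = (b - a) / (2 * n))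
    (hf : ContDiffOn ℝ 6 f (Set.Icc a b)) :
    |(∫ x in a..b, f x) -
        ((h / 15) * ∑ i ∈ Finset.range n,
            (7 * f (a + (2 * i : ℕ) * h) + 16 * f (a + (2 * i + 1 : ℕ) * h)
              + 7 * f (a + (2 * i + 2 : ℕ) * h))
          - (h ^ 2 / 15) *
            (derivWithin f (Set.Icc a b) b - derivWithin f (Set.Icc a b) a))|
      ≤ (1 / 2) * (2 ^ 7 / 604800) * h ^ 6 * (b - a) *
          (⨆ x : Set.Icc a b, |iteratedDerivWithin 6 f (Set.Icc a b) x|) := by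
  have hn₀ : (0 : ℝ) < n := by exact_mod_cast hn
  have hh₀ : 0 < h := by rw [hh]; have := sub_pos.2 hab; positivity
  have hb : b = a + 2 * n * h := by rw [hh]; field_simp; ring
  subst hb
  set s := Icc a (a + 2 * n * h)
  set M := ⨆ x : s, |iteratedDerivWithin 6 f s x|
  have hd := hf.isDerivChainOn_iteratedDerivWithin (uniqueDiffOn_Icc hab)
  have hM : ∀ x ∈ s, |iteratedDerivWithin 6 f s x| ≤ M := fun x hx ↦
    hd.continuousOn.abs_le_iSup_abs isCompact_Icc hx
  have panel : ∀ i ∈ Finset.range n,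
      |correctedSimpsonError f (derivWithin f s) (a + (2 * i + 1 : ℕ) * h) h| ≤
        2 ^ 7 / 604800 * h ^ 7 * M := fun i hi ↦ by
    have hi : (i : ℝ) + 1 ≤ n := by exact_mod_cast Finset.mem_range.mp hi
    have hsub : Icc (a + (2 * i + 1 : ℕ) * h - h) (a + (2 * i + 1 : ℕ) * h + h) ⊆ s := by
      apply Icc_subset_Icc <;> push_cast <;> nlinarith
    simpa only [iteratedDerivWithin_zero, iteratedDerivWithin_one] using
      abs_correctedSimpsonError_le hh₀.le (hd.mono hsub) (fun x hx ↦ hM x (hsub hx))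
  rw [integral_sub_compositeCorrectedSimpson_eq_sum hh₀.le hf.continuousOn]
  calc _ ≤ ∑ i ∈ Finset.range n, 2 ^ 7 / 604800 * h ^ 7 * M :=
        (Finset.abs_sum_le_sum_abs _ _).trans (Finset.sum_le_sum panel)
    _ = _ := by simp only [Finset.sum_const, Finset.card_range, nsmul_eq_mul]; ring
end
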